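/- arXiv:1803.02472 — 11 statements merged into one kernel-verified Lean document; each statement's English description precedes it below -/
import Mathlib

section
/- If Cardinal.mk M > 2 and 1 < |X| ≤ |Xᶜ| (as cardinals), and E is a permutation-invariant equivalence relation on Set M, then the bicardinal slice E(⊟)_X is exactly one of: trivial, properly separative, or properly complementative. -/
/-- Bicardinal equivalence: `X ⊟ Y` iff `|X| = |Y|` and `|Xᶜ| = |Yᶜ|`. -/
def Bicard {M : Type*} (X Y : Set M) : Prop :=
  Cardinal.mk X = Cardinal.mk Y ∧ Cardinal.mk (Xᶜ : Set M) = Cardinal.mk (Yᶜ : Set M)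

/-- `a ⊴ b`: there is `n : ℕ` with `a ≤ n * b`. -/
def Trile (a b : Cardinal) : Prop := ∃ n : ℕ, a ≤ n * b

/-- `a ◁ b`: `a ⊴ b` and not `b ⊴ a`. -/
def Trilt (a b : Cardinal) : Prop := Trile a b ∧ ¬ Trile b a

/-- Permutation invariance of a relation on concepts. -/
def PermInv {M : Type*} (E : Set M → Set M → Prop) : Prop :=
  ∀ (π : M ≃ M) (X Y : Set M), E X Y ↔ E (π '' X) (π '' Y)

/-- The bicardinal slice `E(⊟)_X` is trivial. -/
def TrivialSlice {M : Type*} (E : Set M → Set M → Prop) (X : Set M) : Prop :=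
  ∀ Y Z : Set M, Bicard Y X → Bicard Z X → E Y Z

/-- The bicardinal slice `E(⊟)_X` is separative (refines a separation). -/
def Separative {M : Type*} (E : Set M → Set M → Prop) (X : Set M) : Prop :=
  ∀ Y Z : Set M, Bicard Y X → Bicard Z X → E Y Z →
    Trilt (Cardinal.mk (symmDiff Y Z : Set M)) (Cardinal.mk X)

/-- The bicardinal slice `E(⊟)_X` is complementative (refines a complementation). -/
def Complementative {M : Type*} (E : Set M → Set M → Prop) (X : Set M) : Prop :=
  ∀ Y Z : Set M, Bicard Y X → Bicard Z X → E Y Z →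
    Trilt (Cardinal.mk (symmDiff Y Z : Set M)) (Cardinal.mk X) ∨
      Trilt (Cardinal.mk ((symmDiff Y Z)ᶜ : Set M)) (Cardinal.mk X)

/-- Properly separative: separative and not trivial. -/
def ProperlySeparative {M : Type*} (E : Set M → Set M → Prop) (X : Set M) : Prop :=
  Separative E X ∧ ¬ TrivialSlice E X

/-- Properly complementative: complementative, not separative, and not trivial. -/
def ProperlyComplementative {M : Type*} (E : Set M → Set M → Prop) (X : Set M) : Prop :=
  Complementative E X ∧ ¬ Separative E X ∧ ¬ TrivialSlice E X



open Cardinal Set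

section AuxClassification

universe u
variable {M : Type u}

private lemma add_right_of_le {a b : Cardinal.{u}} (hb : ℵ₀ ≤ b) (h : a ≤ b) : a + b = b :=
  Cardinal.add_eq_right hb h

private lemma add_left_of_le {a b : Cardinal.{u}} (ha : ℵ₀ ≤ a) (h : b ≤ a) : a + b = a :=
  Cardinal.add_eq_left ha h

private lemma card_split (A : Set M) {s t : Cardinal.{u}} (h : s + t = #A) :
    ∃ S : Set M, S ⊆ A ∧ #S = s ∧ #(A \ S : Set M) = t := by
  classical
  have h2 : #(s.out ⊕ t.out) = #(↥A) := by
    rw [← Cardinal.add_def, Cardinal.mk_out, Cardinal.mk_out]; exact h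
  obtain ⟨f⟩ := Cardinal.eq.mp h2
  set g : s.out → M := fun u => (f (Sum.inl u) : M) with hg
  set g' : t.out → M := fun v => (f (Sum.inr v) : M) with hg'
  have hginj : Function.Injective g := fun u v huv =>
    Sum.inl_injective (f.injective (Subtype.val_injective huv))
  have hg'inj : Function.Injective g' := fun u v huv =>
    Sum.inr_injective (f.injective (Subtype.val_injective huv))
  refine ⟨Set.range g, ?_, ?_, ?_⟩
  · rintro x ⟨u, rfl⟩; exact (f (Sum.inl u)).2
  · rw [Cardinal.mk_range_eq g hginj, Cardinal.mk_out]
  · have hAd : A \ Set.range g = Set.range g' := by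
      ext x
      constructor
      · rintro ⟨hxA, hxS⟩
        obtain ⟨w, hw⟩ : ∃ w, f w = ⟨x, hxA⟩ := ⟨f.symm ⟨x, hxA⟩, f.apply_symm_apply _⟩
        rcases w with w | w
        · exact absurd ⟨w, by rw [hg]; simp only [hw]⟩ hxS
        · exact ⟨w, by rw [hg']; simp only [hw]⟩
      · rintro ⟨v, rfl⟩
        refine ⟨(f (Sum.inr v)).2, ?_⟩
        rintro ⟨w, hw⟩
        have h3 : f (Sum.inl w) = f (Sum.inr v) := Subtype.val_injective hw
        simpa using f.injective h3
    rw [hAd, Cardinal.mk_range_eq g' hg'inj, Cardinal.mk_out]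

open scoped Classical in
private noncomputable def code (Y Z : Set M) (x : M) : ℕ :=
  if x ∈ Y then (if x ∈ Z then 0 else 1) else (if x ∈ Z then 2 else 3)

private lemma code_mem_left {Y Z : Set M} {x : M} :
    x ∈ Y ↔ (code Y Z x = 0 ∨ code Y Z x = 1) := by
  by_cases h1 : x ∈ Y <;> by_cases h2 : x ∈ Z <;> simp [code, h1, h2]

private lemma code_mem_right {Y Z : Set M} {x : M} :
    x ∈ Z ↔ (code Y Z x = 0 ∨ code Y Z x = 2) := by
  by_cases h1 : x ∈ Y <;> by_cases h2 : x ∈ Z <;> simp [code, h1, h2]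

private lemma code_fiber (Y Z : Set M) (i : ℕ) :
    {x | code Y Z x = i} =
      if i = 0 then Y ∩ Z else if i = 1 then Y \ Z else if i = 2 then Z \ Y
        else if i = 3 then (Y ∪ Z)ᶜ else ∅ := by
  split_ifs with h0 h1 h2 h3 <;> subst_eqs <;> ext x <;>
    by_cases hY : x ∈ Y <;> by_cases hZ : x ∈ Z <;>
    simp [code, hY, hZ] <;> omega

private lemma shape_transfer {E : Set M → Set M → Prop} (hPI : PermInv E)
    {Y Z Y' Z' : Set M}
    (h1 : #(Y \ Z : Set M) = #(Y' \ Z' : Set M))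
    (h2 : #(Z \ Y : Set M) = #(Z' \ Y' : Set M))
    (h3 : #(Y ∩ Z : Set M) = #(Y' ∩ Z' : Set M))
    (h4 : #((Y ∪ Z)ᶜ : Set M) = #((Y' ∪ Z')ᶜ : Set M)) :
    E Y Z ↔ E Y' Z' := by
  classical
  have hfib : ∀ i : ℕ, #({x | code Y Z x = i} : Set M) = #({x | code Y' Z' x = i} : Set M) := by
    intro i
    rw [code_fiber, code_fiber]
    split_ifs
    · exact h3
    · exact h1
    · exact h2
    · exact h4
    · rfl
  have g : ∀ i : ℕ, {x // code Y Z x = i} ≃ {x // code Y' Z' x = i} := fun i =>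
    Classical.choice (Cardinal.eq.mp (hfib i))
  let π : M ≃ M :=
    (Equiv.sigmaFiberEquiv (code Y Z)).symm.trans
      ((Equiv.sigmaCongrRight g).trans (Equiv.sigmaFiberEquiv (code Y' Z')))
  have hπ : ∀ x, code Y' Z' (π x) = code Y Z x := fun x => (g (code Y Z x) ⟨x, rfl⟩).2
  have himg : ∀ (A A' : Set M) (k l : ℕ),
      (∀ x, x ∈ A ↔ (code Y Z x = k ∨ code Y Z x = l)) →
      (∀ x, x ∈ A' ↔ (code Y' Z' x = k ∨ code Y' Z' x = l)) → π '' A = A' := by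
    intro A A' k l hA hA'
    ext y
    constructor
    · rintro ⟨x, hx, rfl⟩
      exact (hA' _).mpr (by rw [hπ x]; exact (hA x).mp hx)
    · intro hy
      refine ⟨π.symm y, ?_, by simp⟩
      apply (hA _).mpr
      have := hπ (π.symm y)
      rw [Equiv.apply_symm_apply] at this
      rw [← this]
      exact (hA' y).mp hy
  have hY' : π '' Y = Y' := himg Y Y' 0 1 (fun _ => code_mem_left) (fun _ => code_mem_left)
  have hZ' : π '' Z = Z' := himg Z Z' 0 2 (fun _ => code_mem_right) (fun _ => code_mem_right)
  rw [hPI π Y Z, hY', hZ']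

set_option maxHeartbeats 2000000 in
private lemma ML2 {E : Set M → Set M → Prop} (hE : Equivalence E)
    (Y W : Set M) (α1 β1 α2 β2 α3 β3 α4 β4 : Cardinal.{u})
    (h1 : α1 + β1 = #(Y \ W : Set M))
    (h2 : α2 + β2 = #(W \ Y : Set M))
    (h3 : α3 + β3 = #(Y ∩ W : Set M))
    (h4 : α4 + β4 = #((Y ∪ W)ᶜ : Set M))
    (hrel1 : ∀ Z : Set M, #(Y \ Z : Set M) = β1 + β3 →
      #(Z \ Y : Set M) = α2 + α4 → #(Y ∩ Z : Set M) = α1 + α3 →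
      #((Y ∪ Z)ᶜ : Set M) = β2 + β4 → E Y Z)
    (hrel2 : ∀ Z : Set M, #(W \ Z : Set M) = β2 + β3 →
      #(Z \ W : Set M) = α1 + α4 → #(W ∩ Z : Set M) = α2 + α3 →
      #((W ∪ Z)ᶜ : Set M) = β1 + β4 → E W Z) :
    E Y W := by
  obtain ⟨S1, hS1, hS1c, hS1d⟩ := card_split (Y \ W) h1
  obtain ⟨S2, hS2, hS2c, hS2d⟩ := card_split (W \ Y) h2
  obtain ⟨S3, hS3, hS3c, hS3d⟩ := card_split (Y ∩ W) h3
  obtain ⟨S4, hS4, hS4c, hS4d⟩ := card_split ((Y ∪ W)ᶜ) h4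
  have idYZ : Y \ (S1 ∪ S2 ∪ S3 ∪ S4) = ((Y \ W) \ S1) ∪ ((Y ∩ W) \ S3) := by
    ext x
    have a1 := @hS1 x; have a2 := @hS2 x; have a3 := @hS3 x; have a4 := @hS4 x
    simp only [mem_union, mem_diff, mem_inter_iff, mem_compl_iff] at a1 a2 a3 a4 ⊢
    tauto
  have idZY : (S1 ∪ S2 ∪ S3 ∪ S4) \ Y = S2 ∪ S4 := by
    ext x
    have a1 := @hS1 x; have a2 := @hS2 x; have a3 := @hS3 x; have a4 := @hS4 x
    simp only [mem_union, mem_diff, mem_inter_iff, mem_compl_iff] at a1 a2 a3 a4 ⊢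
    tauto
  have idYZi : Y ∩ (S1 ∪ S2 ∪ S3 ∪ S4) = S1 ∪ S3 := by
    ext x
    have a1 := @hS1 x; have a2 := @hS2 x; have a3 := @hS3 x; have a4 := @hS4 x
    simp only [mem_union, mem_diff, mem_inter_iff, mem_compl_iff] at a1 a2 a3 a4 ⊢
    tauto
  have idYZc : (Y ∪ (S1 ∪ S2 ∪ S3 ∪ S4))ᶜ = ((W \ Y) \ S2) ∪ ((Y ∪ W)ᶜ \ S4) := by
    ext x
    have a1 := @hS1 x; have a2 := @hS2 x; have a3 := @hS3 x; have a4 := @hS4 x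
    simp only [mem_union, mem_diff, mem_inter_iff, mem_compl_iff] at a1 a2 a3 a4 ⊢
    tauto
  have idWZ : W \ (S1 ∪ S2 ∪ S3 ∪ S4) = ((W \ Y) \ S2) ∪ ((Y ∩ W) \ S3) := by
    ext x
    have a1 := @hS1 x; have a2 := @hS2 x; have a3 := @hS3 x; have a4 := @hS4 x
    simp only [mem_union, mem_diff, mem_inter_iff, mem_compl_iff] at a1 a2 a3 a4 ⊢
    tauto
  have idZW : (S1 ∪ S2 ∪ S3 ∪ S4) \ W = S1 ∪ S4 := by
    ext x
    have a1 := @hS1 x; have a2 := @hS2 x; have a3 := @hS3 x; have a4 := @hS4 x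
    simp only [mem_union, mem_diff, mem_inter_iff, mem_compl_iff] at a1 a2 a3 a4 ⊢
    tauto
  have idWZi : W ∩ (S1 ∪ S2 ∪ S3 ∪ S4) = S2 ∪ S3 := by
    ext x
    have a1 := @hS1 x; have a2 := @hS2 x; have a3 := @hS3 x; have a4 := @hS4 x
    simp only [mem_union, mem_diff, mem_inter_iff, mem_compl_iff] at a1 a2 a3 a4 ⊢
    tauto
  have idWZc : (W ∪ (S1 ∪ S2 ∪ S3 ∪ S4))ᶜ = ((Y \ W) \ S1) ∪ ((Y ∪ W)ᶜ \ S4) := by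
    ext x
    have a1 := @hS1 x; have a2 := @hS2 x; have a3 := @hS3 x; have a4 := @hS4 x
    simp only [mem_union, mem_diff, mem_inter_iff, mem_compl_iff] at a1 a2 a3 a4 ⊢
    tauto
  have d13 : Disjoint ((Y \ W) \ S1) ((Y ∩ W) \ S3) := by
    rw [Set.disjoint_left]; rintro x ⟨⟨_, hxW⟩, _⟩ ⟨⟨_, hxW'⟩, _⟩; exact hxW hxW'
  have d24 : Disjoint S2 S4 := by
    rw [Set.disjoint_left]; intro x hx2 hx4
    exact (hS4 hx4) (Or.inr (hS2 hx2).1)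
  have d13' : Disjoint S1 S3 := by
    rw [Set.disjoint_left]; intro x hx1 hx3
    exact (hS1 hx1).2 (hS3 hx3).2
  have dc1 : Disjoint ((W \ Y) \ S2) ((Y ∪ W)ᶜ \ S4) := by
    rw [Set.disjoint_left]; rintro x ⟨⟨hxW, _⟩, _⟩ ⟨hxc, _⟩; exact hxc (Or.inr hxW)
  have dWZ : Disjoint ((W \ Y) \ S2) ((Y ∩ W) \ S3) := by
    rw [Set.disjoint_left]; rintro x ⟨⟨_, hxY⟩, _⟩ ⟨⟨hxY', _⟩, _⟩; exact hxY hxY'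
  have d14 : Disjoint S1 S4 := by
    rw [Set.disjoint_left]; intro x hx1 hx4
    exact (hS4 hx4) (Or.inl (hS1 hx1).1)
  have d23 : Disjoint S2 S3 := by
    rw [Set.disjoint_left]; intro x hx2 hx3
    exact (hS2 hx2).2 (hS3 hx3).1
  have dWZc : Disjoint ((Y \ W) \ S1) ((Y ∪ W)ᶜ \ S4) := by
    rw [Set.disjoint_left]; rintro x ⟨⟨hxY, _⟩, _⟩ ⟨hxc, _⟩; exact hxc (Or.inl hxY)
  refine hE.trans (hrel1 (S1 ∪ S2 ∪ S3 ∪ S4) ?_ ?_ ?_ ?_)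
    (hE.symm (hrel2 (S1 ∪ S2 ∪ S3 ∪ S4) ?_ ?_ ?_ ?_))
  · rw [idYZ, Cardinal.mk_union_of_disjoint d13, hS1d, hS3d]
  · rw [idZY, Cardinal.mk_union_of_disjoint d24, hS2c, hS4c]
  · rw [idYZi, Cardinal.mk_union_of_disjoint d13', hS1c, hS3c]
  · rw [idYZc, Cardinal.mk_union_of_disjoint dc1, hS2d, hS4d]
  · rw [idWZ, Cardinal.mk_union_of_disjoint dWZ, hS2d, hS3d]
  · rw [idZW, Cardinal.mk_union_of_disjoint d14, hS1c, hS4c]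
  · rw [idWZi, Cardinal.mk_union_of_disjoint d23, hS2c, hS3c]
  · rw [idWZc, Cardinal.mk_union_of_disjoint dWZc, hS1d, hS4d]

private lemma decompA (A B : Set M) : #(A ∩ B : Set M) + #(A \ B : Set M) = #A := by
  have hd : Disjoint (A ∩ B) (A \ B) := by
    rw [Set.disjoint_left]; rintro x ⟨_, hxB⟩ ⟨_, hxB'⟩; exact hxB' hxB
  rw [← Cardinal.mk_union_of_disjoint hd, Set.inter_union_diff]

private lemma decompC (A B : Set M) :
    #(B \ A : Set M) + #((A ∪ B)ᶜ : Set M) = #(Aᶜ : Set M) := by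
  have hd : Disjoint (B \ A) ((A ∪ B)ᶜ : Set M) := by
    rw [Set.disjoint_left]; rintro x ⟨hxB, _⟩ hxc; exact hxc (Or.inr hxB)
  have hset : (B \ A) ∪ ((A ∪ B)ᶜ : Set M) = Aᶜ := by
    ext x
    simp only [mem_union, mem_diff, mem_compl_iff]
    tauto
  rw [← hset, Cardinal.mk_union_of_disjoint hd]

private lemma trile_self_of_le {c κ : Cardinal.{u}} (h : c ≤ κ) : Trile c κ :=
  ⟨1, by rwa [Nat.cast_one, one_mul]⟩

private lemma ge_of_not_trilt_inf {c κ : Cardinal.{u}} (hκ : ℵ₀ ≤ κ) (hcκ : c ≤ κ)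
    (h : ¬ Trilt c κ) : κ ≤ c := by
  have h2 : Trile κ c := by
    by_contra h2
    exact h ⟨trile_self_of_le hcκ, h2⟩
  obtain ⟨n, hn⟩ := h2
  by_cases hc : ℵ₀ ≤ c
  · have hn0 : (n : Cardinal) ≠ 0 := by
      rintro h0
      rw [h0, zero_mul, le_zero_iff] at hn
      rw [hn] at hκ
      exact (Cardinal.aleph0_pos.not_ge) (le_of_le_of_eq hκ rfl)
    rwa [Cardinal.mul_eq_right hc ((Cardinal.nat_lt_aleph0 n).le.trans hc) hn0] at hn
  · have hlt : (n : Cardinal) * c < ℵ₀ :=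
      Cardinal.mul_lt_aleph0 (Cardinal.nat_lt_aleph0 n) (not_le.mp hc)
    exact absurd (hκ.trans hn) hlt.not_ge

private lemma trilt_zero_fin {κ : Cardinal.{u}} (hκ0 : κ ≠ 0) : Trilt 0 κ := by
  constructor
  · exact ⟨0, by simp⟩
  · rintro ⟨n, hn⟩
    rw [mul_zero, le_zero_iff] at hn
    exact hκ0 hn
private lemma inf_case {E : Set M → Set M → Prop} (hE : Equivalence E)
    (κ lam q a d : Cardinal.{u})
    (hκ : ℵ₀ ≤ κ) (hκlam : κ ≤ lam)
    (hqa : a + q = κ) (hqd : q + d = lam) (hκd : κ + d = lam)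
    (hcase : a = κ ∨ d = lam)
    (hrel : ∀ Y Z : Set M, #(Y \ Z : Set M) = κ → #(Z \ Y : Set M) = q →
      #(Y ∩ Z : Set M) = a → #((Y ∪ Z)ᶜ : Set M) = d → E Y Z) :
    ∀ Y W : Set M, #Y = κ → #(Yᶜ : Set M) = lam → #W = κ → #(Wᶜ : Set M) = lam → E Y W := by
  have hlam : ℵ₀ ≤ lam := hκ.trans hκlam
  have ha : a ≤ κ := hqa ▸ self_le_add_right a q
  have hq : q ≤ κ := hqa ▸ self_le_add_left q a
  -- Step: all pairs of shape (κ, κ, κ, lam) are related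
  have hrelT2 : ∀ Y W : Set M, #(Y \ W : Set M) = κ → #(W \ Y : Set M) = κ →
      #(Y ∩ W : Set M) = κ → #((Y ∪ W)ᶜ : Set M) = lam → E Y W := by
    by_cases hdl : d = lam
    · -- A1 : shape (κ, κ, a, lam)
      have hrelT1 : ∀ Y W : Set M, #(Y \ W : Set M) = κ → #(W \ Y : Set M) = κ →
          #(Y ∩ W : Set M) = a → #((Y ∪ W)ᶜ : Set M) = lam → E Y W := by
        intro Y W e1 e2 e3 e4
        apply ML2 hE Y W 0 κ 0 κ a 0 q lam
        · rw [e1, zero_add]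
        · rw [e2, zero_add]
        · rw [e3, add_zero]
        · rw [e4]; exact add_right_of_le hlam (hq.trans hκlam)
        · intro Z f1 f2 f3 f4
          refine hrel Y Z (by rw [f1, add_zero]) (by rw [f2, zero_add])
            (by rw [f3, zero_add]) ?_
          rw [f4, hdl]; exact add_right_of_le hlam hκlam
        · intro Z f1 f2 f3 f4
          refine hrel W Z (by rw [f1, add_zero]) (by rw [f2, zero_add])
            (by rw [f3, zero_add]) ?_
          rw [f4, hdl]; exact add_right_of_le hlam hκlam
      -- A2 : any shape with outside part lam
      have hrelT2' : ∀ Y W : Set M, #(Y ∩ W : Set M) + #(Y \ W : Set M) = κ →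
          #(Y ∩ W : Set M) + #(W \ Y : Set M) = κ →
          #((Y ∪ W)ᶜ : Set M) = lam → E Y W := by
        intro Y W c1 c2 c4
        have hp' : #(Y \ W : Set M) ≤ κ := c1 ▸ self_le_add_left _ _
        have hq' : #(W \ Y : Set M) ≤ κ := c2 ▸ self_le_add_left _ _
        have ha' : #(Y ∩ W : Set M) ≤ κ := c1 ▸ self_le_add_right _ _
        by_cases haκ : #(Y ∩ W : Set M) = κ
        · apply ML2 hE Y W 0 (#(Y \ W : Set M)) 0 (#(W \ Y : Set M)) a κ κ lam
          · rw [zero_add]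
          · rw [zero_add]
          · rw [haκ]; exact add_right_of_le hκ ha
          · rw [c4]; exact add_right_of_le hlam hκlam
          · intro Z f1 f2 f3 f4
            refine hrelT1 Y Z ?_ (by rw [f2, zero_add]) (by rw [f3, zero_add]) ?_
            · rw [f1]; exact add_right_of_le hκ hp'
            · rw [f4]; exact add_right_of_le hlam (hq'.trans hκlam)
          · intro Z f1 f2 f3 f4
            refine hrelT1 W Z ?_ (by rw [f2, zero_add]) (by rw [f3, zero_add]) ?_
            · rw [f1]; exact add_right_of_le hκ hq'
            · rw [f4]; exact add_right_of_le hlam (hp'.trans hκlam)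
        · have hpκ : #(Y \ W : Set M) = κ := by
            by_contra hne
            have h1 : #(Y ∩ W : Set M) < κ := lt_of_le_of_ne ha' haκ
            have h2 : #(Y \ W : Set M) < κ := lt_of_le_of_ne hp' hne
            exact absurd c1 (Cardinal.add_lt_of_lt hκ h1 h2).ne
          have hqκ : #(W \ Y : Set M) = κ := by
            by_contra hne
            have h1 : #(Y ∩ W : Set M) < κ := lt_of_le_of_ne ha' haκ
            have h2 : #(W \ Y : Set M) < κ := lt_of_le_of_ne hq' hne
            exact absurd c2 (Cardinal.add_lt_of_lt hκ h1 h2).ne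
          apply ML2 hE Y W a κ a κ 0 (#(Y ∩ W : Set M)) κ lam
          · rw [hpκ]; exact add_right_of_le hκ ha
          · rw [hqκ]; exact add_right_of_le hκ ha
          · rw [zero_add]
          · rw [c4]; exact add_right_of_le hlam hκlam
          · intro Z f1 f2 f3 f4
            refine hrelT1 Y Z ?_ ?_ (by rw [f3, add_zero]) ?_
            · rw [f1]; exact add_left_of_le hκ ha'
            · rw [f2]; exact add_right_of_le hκ ha
            · rw [f4]; exact add_right_of_le hlam hκlam
          · intro Z f1 f2 f3 f4
            refine hrelT1 W Z ?_ ?_ (by rw [f3, add_zero]) ?_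
            · rw [f1]; exact add_left_of_le hκ ha'
            · rw [f2]; exact add_right_of_le hκ ha
            · rw [f4]; exact add_right_of_le hlam hκlam
      intro Y W e1 e2 e3 e4
      exact hrelT2' Y W (by rw [e3, e1]; exact Cardinal.add_eq_self hκ)
        (by rw [e3, e2]; exact Cardinal.add_eq_self hκ) e4
    · -- a = κ, d < κ, lam = κ, q = κ
      have haκ : a = κ := hcase.resolve_right hdl
      have hdκ : d < κ := by
        by_contra hge
        have hge' : κ ≤ d := not_lt.mp hge
        have : κ + d = d := add_right_of_le (hκ.trans hge') hge'
        exact hdl (this.symm.trans hκd)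
      have hlamκ : lam = κ := by
        rw [← hκd]; exact add_left_of_le hκ hdκ.le
      have hqκ : q = κ := by
        by_contra hne
        have h2 : q < κ := lt_of_le_of_ne hq hne
        have : q + d < κ := Cardinal.add_lt_of_lt hκ h2 hdκ
        rw [hqd, hlamκ] at this
        exact this.false
      intro Y W e1 e2 e3 e4
      apply ML2 hE Y W κ d κ d κ κ κ 0
      · rw [e1]; exact add_left_of_le hκ hdκ.le
      · rw [e2]; exact add_left_of_le hκ hdκ.le
      · rw [e3]; exact Cardinal.add_eq_self hκ
      · rw [e4, hlamκ, add_zero]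
      · intro Z f1 f2 f3 f4
        refine hrel Y Z ?_ ?_ ?_ (by rw [f4, add_zero])
        · rw [f1]; exact add_right_of_le hκ hdκ.le
        · rw [f2, hqκ]; exact Cardinal.add_eq_self hκ
        · rw [f3, haκ]; exact Cardinal.add_eq_self hκ
      · intro Z f1 f2 f3 f4
        refine hrel W Z ?_ ?_ ?_ (by rw [f4, add_zero])
        · rw [f1]; exact add_right_of_le hκ hdκ.le
        · rw [f2, hqκ]; exact Cardinal.add_eq_self hκ
        · rw [f3, haκ]; exact Cardinal.add_eq_self hκ
  -- Final step
  intro Y W hY hYc hW hWc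
  have cY : #(Y ∩ W : Set M) + #(Y \ W : Set M) = κ := by rw [decompA Y W, hY]
  have cW : #(Y ∩ W : Set M) + #(W \ Y : Set M) = κ := by
    have := decompA W Y
    rw [hW, Set.inter_comm W Y] at this
    exact this
  have cYc : #(W \ Y : Set M) + #((Y ∪ W)ᶜ : Set M) = lam := by rw [decompC Y W, hYc]
  have cWc : #(Y \ W : Set M) + #((Y ∪ W)ᶜ : Set M) = lam := by
    have := decompC W Y
    rw [hWc, Set.union_comm W Y] at this
    exact this
  set p' := #(Y \ W : Set M) with hp'
  set q' := #(W \ Y : Set M) with hq'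
  set a' := #(Y ∩ W : Set M) with ha'
  set d' := #((Y ∪ W)ᶜ : Set M) with hd'
  have hite : ∀ x : Cardinal.{u}, (if κ ≤ x then κ else 0) + x = x := by
    intro x
    split_ifs with h
    · exact add_right_of_le (hκ.trans h) h
    · rw [zero_add]
  have hite2 : ∀ x y : Cardinal.{u}, κ ≤ x + y →
      (if κ ≤ x then κ else 0) + (if κ ≤ y then κ else 0) = κ := by
    intro x y hxy
    by_cases hx : κ ≤ x
    · rw [if_pos hx]
      exact add_left_of_le hκ (by split_ifs <;> simp)
    · have hy : κ ≤ y := by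
        by_contra hy
        exact absurd hxy (Cardinal.add_lt_of_lt hκ (not_le.mp hx) (not_le.mp hy)).not_ge
      rw [if_neg hx, if_pos hy, zero_add]
  apply ML2 hE Y W (if κ ≤ p' then κ else 0) p' (if κ ≤ q' then κ else 0) q'
    (if κ ≤ a' then κ else 0) a' (if κ ≤ d' then κ else 0) d'
  · exact hite p'
  · exact hite q'
  · exact hite a'
  · exact hite d'
  · intro Z f1 f2 f3 f4
    refine hrelT2 Y Z ?_ ?_ ?_ ?_
    · rw [f1, add_comm]; exact cY
    · rw [f2]; exact hite2 q' d' (by rw [cYc]; exact hκlam)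
    · rw [f3]; exact hite2 p' a' (by rw [add_comm, cY])
    · rw [f4]; exact cYc
  · intro Z f1 f2 f3 f4
    refine hrelT2 W Z ?_ ?_ ?_ ?_
    · rw [f1, add_comm]; exact cW
    · rw [f2]; exact hite2 p' d' (by rw [cWc]; exact hκlam)
    · rw [f3]; exact hite2 q' a' (by rw [add_comm, cW])
    · rw [f4]; exact cWc
set_option maxHeartbeats 2000000 in
private lemma fin_case {E : Set M → Set M → Prop} (hE : Equivalence E)
    (κ lam p a d : Cardinal.{u})
    (hκfin : κ < ℵ₀) (hκ0 : κ ≠ 0)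
    (hap : a + p = κ) (hpd : p + d = lam)
    (hp0 : p ≠ 0) (hnad : ¬(a = 0 ∧ d = 0))
    (hrel : ∀ Y Z : Set M, #(Y \ Z : Set M) = p → #(Z \ Y : Set M) = p →
      #(Y ∩ Z : Set M) = a → #((Y ∪ Z)ᶜ : Set M) = d → E Y Z) :
    ∀ Y W : Set M, #Y = κ → #(Yᶜ : Set M) = lam → #W = κ → #(Wᶜ : Set M) = lam → E Y W := by
  have one_fin : (1 : Cardinal.{u}) < ℵ₀ := Cardinal.one_lt_aleph0
  -- step P1
  have P1 : ∀ Y W : Set M, #Y = κ → #(Yᶜ : Set M) = lam → #W = κ → #(Wᶜ : Set M) = lam →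
      #(Y \ W : Set M) = 1 → E Y W := by
    intro Y W hY hYc hW hWc h1'
    have cY : #(Y ∩ W : Set M) + 1 = κ := by rw [← h1', decompA Y W, hY]
    have haf : #(Y ∩ W : Set M) < ℵ₀ :=
      lt_of_le_of_lt (le_trans (self_le_add_right _ _) cY.le) hκfin
    have hWY1 : #(W \ Y : Set M) = 1 := by
      have cW : #(Y ∩ W : Set M) + #(W \ Y : Set M) = κ := by
        have := decompA W Y
        rw [hW, Set.inter_comm W Y] at this
        exact this
      exact Cardinal.eq_of_add_eq_add_left (cW.trans cY.symm) haf
    have cYc : 1 + #((Y ∪ W)ᶜ : Set M) = lam := by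
      rw [← hWY1, decompC Y W, hYc]
    by_cases ha0 : a = 0
    · -- a = 0 : p = κ, d ≠ 0
      have hd0 : d ≠ 0 := fun h => hnad ⟨ha0, h⟩
      have hpκ : p = κ := by rwa [ha0, zero_add] at hap
      obtain ⟨c1, hc1⟩ : ∃ c1, p = 1 + c1 :=
        exists_add_of_le (Cardinal.one_le_iff_ne_zero.mpr hp0)
      obtain ⟨c4, hc4⟩ : ∃ c4, d = 1 + c4 :=
        exists_add_of_le (Cardinal.one_le_iff_ne_zero.mpr hd0)
      apply ML2 hE Y W 0 1 0 1 0 c1 p c4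
      · rw [zero_add, h1']
      · rw [zero_add, hWY1]
      · rw [zero_add]
        refine Cardinal.eq_of_add_eq_add_left (a := 1) ?_ one_fin
        rw [← hc1, hpκ, ← cY, add_comm]
      · refine Cardinal.eq_of_add_eq_add_left (a := 1) ?_ one_fin
        rw [← add_assoc, add_comm 1 p, add_assoc, ← hc4, hpd, ← cYc]
      · intro Z f1 f2 f3 f4
        refine hrel Y Z (by rw [f1, ← hc1]) (by rw [f2, zero_add])
          (by rw [f3, zero_add, ha0]) (by rw [f4, ← hc4])
      · intro Z f1 f2 f3 f4
        refine hrel W Z (by rw [f1, ← hc1]) (by rw [f2, zero_add])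
          (by rw [f3, zero_add, ha0]) (by rw [f4, ← hc4])
    · -- a ≠ 0
      obtain ⟨c3, hc3⟩ : ∃ c3, a = 1 + c3 :=
        exists_add_of_le (Cardinal.one_le_iff_ne_zero.mpr ha0)
      obtain ⟨c4, hc4⟩ : ∃ c4, p = 1 + c4 :=
        exists_add_of_le (Cardinal.one_le_iff_ne_zero.mpr hp0)
      apply ML2 hE Y W 1 0 1 0 c3 p c4 d
      · rw [add_zero, h1']
      · rw [add_zero, hWY1]
      · refine Cardinal.eq_of_add_eq_add_left (a := 1) ?_ one_fin
        rw [← add_assoc, ← hc3, hap, ← cY, add_comm]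
      · refine Cardinal.eq_of_add_eq_add_left (a := 1) ?_ one_fin
        rw [← add_assoc, ← hc4, hpd, ← cYc]
      · intro Z f1 f2 f3 f4
        refine hrel Y Z (by rw [f1, zero_add]) (by rw [f2, ← hc4])
          (by rw [f3, ← hc3]) (by rw [f4, zero_add])
      · intro Z f1 f2 f3 f4
        refine hrel W Z (by rw [f1, zero_add]) (by rw [f2, ← hc4])
          (by rw [f3, ← hc3]) (by rw [f4, zero_add])
  -- induction
  have Pn : ∀ n : ℕ, ∀ Y W : Set M, #Y = κ → #(Yᶜ : Set M) = lam → #W = κ →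
      #(Wᶜ : Set M) = lam → #(Y \ W : Set M) = (n : Cardinal) → E Y W := by
    intro n
    induction n with
    | zero =>
      intro Y W hY hYc hW hWc h0
      rw [Nat.cast_zero] at h0
      have hYW : Y ⊆ W := by
        rw [← Set.diff_eq_empty, ← Set.isEmpty_coe_sort, ← Cardinal.mk_eq_zero_iff]
        exact h0
      have hWY : W ⊆ Y := by
        have hd : #(W \ Y : Set M) + #Y = #W := Cardinal.mk_diff_add_mk hYW
        rw [hY, hW] at hd
        have h0' : #(W \ Y : Set M) + κ = 0 + κ := by rw [hd, zero_add]
        have := Cardinal.eq_of_add_eq_add_right h0' hκfin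
        rw [← Set.diff_eq_empty, ← Set.isEmpty_coe_sort, ← Cardinal.mk_eq_zero_iff]
        exact this
      have : Y = W := Set.Subset.antisymm hYW hWY
      rw [this]
      exact hE.refl W
    | succ n ih =>
      intro Y W hY hYc hW hWc hn
      have cY : #(Y ∩ W : Set M) + ((n : Cardinal) + 1) = κ := by
        rw [← Nat.cast_succ, ← hn, decompA Y W, hY]
      have haf : #(Y ∩ W : Set M) < ℵ₀ :=
        lt_of_le_of_lt (le_trans (self_le_add_right _ _) cY.le) hκfin
      have hWYn : #(W \ Y : Set M) = (n : Cardinal) + 1 := by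
        have cW : #(Y ∩ W : Set M) + #(W \ Y : Set M) = κ := by
          have := decompA W Y
          rw [hW, Set.inter_comm W Y] at this
          exact this
        exact Cardinal.eq_of_add_eq_add_left (cW.trans cY.symm) haf
      have hne1 : #(Y \ W : Set M) ≠ 0 := by
        rw [hn]
        exact_mod_cast Nat.succ_ne_zero n
      have hYWne : (Y \ W).Nonempty := Set.nonempty_coe_sort.mp (Cardinal.mk_ne_zero_iff.mp hne1)
      have hne2 : #(W \ Y : Set M) ≠ 0 := by
        rw [hWYn]
        intro h
        have h' : ((n : Cardinal) + 1) = 0 := h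
        simp at h'
      have hWYne : (W \ Y).Nonempty := Set.nonempty_coe_sort.mp (Cardinal.mk_ne_zero_iff.mp hne2)
      obtain ⟨y, hyY, hyW⟩ := hYWne
      obtain ⟨w, hwW, hwY⟩ := hWYne
      set Z : Set M := insert y (W \ {w}) with hZdef
      have hyns : y ∉ W \ {w} := fun h => hyW h.1
      have hZκ : #Z = κ := by
        rw [hZdef, Cardinal.mk_insert hyns]
        have : #(W \ {w} : Set M) + #({w} : Set M) = #W :=
          Cardinal.mk_diff_add_mk (Set.singleton_subset_iff.mpr hwW)
        rw [Cardinal.mk_singleton] at this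
        rw [this, hW]
      have hZc : #(Zᶜ : Set M) = lam := by
        have hid : Zᶜ = insert w ((Wᶜ : Set M) \ {y}) := by
          ext x
          have e1 : x = y → x ∈ Y := fun h => h ▸ hyY
          have e2 : x = w → x ∈ W := fun h => h ▸ hwW
          have e3 : x = y → x ∉ W := fun h => h ▸ hyW
          have e4 : x = w → x ∉ Y := fun h => h ▸ hwY
          simp only [hZdef, Set.mem_compl_iff, Set.mem_insert_iff, Set.mem_diff,
            Set.mem_singleton_iff]
          tauto
        rw [hid]
        have hwns : w ∉ (Wᶜ : Set M) \ {y} := fun h => h.1 hwW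
        rw [Cardinal.mk_insert hwns]
        have : #((Wᶜ : Set M) \ {y} : Set M) + #({y} : Set M) = #(Wᶜ : Set M) :=
          Cardinal.mk_diff_add_mk (Set.singleton_subset_iff.mpr hyW)
        rw [Cardinal.mk_singleton] at this
        rw [this, hWc]
      have hYZ : #(Y \ Z : Set M) = (n : Cardinal) := by
        have hid : Y \ Z = (Y \ W) \ {y} := by
          ext x
          have e2 : x = w → x ∈ W := fun h => h ▸ hwW
          have e4 : x = w → x ∉ Y := fun h => h ▸ hwY
          simp only [hZdef, Set.mem_diff, Set.mem_insert_iff, Set.mem_singleton_iff]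
          tauto
        rw [hid]
        have hsub : ({y} : Set M) ⊆ Y \ W := Set.singleton_subset_iff.mpr ⟨hyY, hyW⟩
        have := Cardinal.mk_diff_add_mk hsub
        rw [Cardinal.mk_singleton, hn, Nat.cast_succ] at this
        exact Cardinal.eq_of_add_eq_add_right this one_fin
      have hWZ : #(W \ Z : Set M) = 1 := by
        have hid : W \ Z = {w} := by
          ext x
          have e2 : x = w → x ∈ W := fun h => h ▸ hwW
          have e3 : x = y → x ∉ W := fun h => h ▸ hyW
          simp only [hZdef, Set.mem_diff, Set.mem_insert_iff, Set.mem_singleton_iff]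
          tauto
        rw [hid, Cardinal.mk_singleton]
      exact hE.trans (ih Y Z hY hYc hZκ hZc hYZ) (hE.symm (P1 W Z hW hWc hZκ hZc hWZ))
  intro Y W hY hYc hW hWc
  have hfin : #(Y \ W : Set M) < ℵ₀ :=
    lt_of_le_of_lt (le_trans (Cardinal.mk_le_mk_of_subset Set.diff_subset) hY.le) hκfin
  obtain ⟨n, hn⟩ := Cardinal.lt_aleph0.mp hfin
  exact Pn n Y W hY hYc hW hWc hn
set_option maxHeartbeats 1000000 in
private lemma key {E : Set M → Set M → Prop} (hE : Equivalence E) (hPI : PermInv E)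
    (X : Set M) (hX : 1 < #X) (hXc : #X ≤ #(Xᶜ : Set M))
    (Y₀ Z₀ : Set M) (hY₀ : Bicard Y₀ X) (hZ₀ : Bicard Z₀ X) (hEw : E Y₀ Z₀)
    (hmu : ¬ Trilt (#(symmDiff Y₀ Z₀ : Set M)) (#X))
    (hnu : ¬ Trilt (#((symmDiff Y₀ Z₀)ᶜ : Set M)) (#X)) :
    TrivialSlice E X := by
  have hYκ : #Y₀ = #X := hY₀.1
  have hYlam : #(Y₀ᶜ : Set M) = #(Xᶜ : Set M) := hY₀.2
  have hZκ : #Z₀ = #X := hZ₀.1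
  have hZlam : #(Z₀ᶜ : Set M) = #(Xᶜ : Set M) := hZ₀.2
  have hap : #(Y₀ ∩ Z₀ : Set M) + #(Y₀ \ Z₀ : Set M) = #X := by rw [decompA, hYκ]
  have haq : #(Y₀ ∩ Z₀ : Set M) + #(Z₀ \ Y₀ : Set M) = #X := by
    have := decompA Z₀ Y₀
    rw [hZκ, Set.inter_comm Z₀ Y₀] at this
    exact this
  have hqd : #(Z₀ \ Y₀ : Set M) + #((Y₀ ∪ Z₀)ᶜ : Set M) = #(Xᶜ : Set M) := by
    rw [decompC, hYlam]
  have hpd : #(Y₀ \ Z₀ : Set M) + #((Y₀ ∪ Z₀)ᶜ : Set M) = #(Xᶜ : Set M) := by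
    have := decompC Z₀ Y₀
    rw [hZlam, Set.union_comm Z₀ Y₀] at this
    exact this
  have hmu' : #(symmDiff Y₀ Z₀ : Set M) = #(Y₀ \ Z₀ : Set M) + #(Z₀ \ Y₀ : Set M) := by
    have hd : Disjoint (Y₀ \ Z₀) (Z₀ \ Y₀) := by
      rw [Set.disjoint_left]; rintro x ⟨_, h2⟩ ⟨h3, _⟩; exact h2 h3
    rw [Set.symmDiff_def, Cardinal.mk_union_of_disjoint hd]
  have hnu' : #((symmDiff Y₀ Z₀)ᶜ : Set M) = #(Y₀ ∩ Z₀ : Set M) + #((Y₀ ∪ Z₀)ᶜ : Set M) := by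
    have hset : (symmDiff Y₀ Z₀)ᶜ = (Y₀ ∩ Z₀) ∪ ((Y₀ ∪ Z₀)ᶜ : Set M) := by
      rw [Set.symmDiff_def]
      ext x
      simp only [Set.mem_compl_iff, Set.mem_union, Set.mem_diff, Set.mem_inter_iff,
        Set.sup_eq_union]
      tauto
    have hd : Disjoint (Y₀ ∩ Z₀) ((Y₀ ∪ Z₀)ᶜ : Set M) := by
      rw [Set.disjoint_left]; rintro x ⟨h1, _⟩ hc; exact hc (Or.inl h1)
    rw [hset, Cardinal.mk_union_of_disjoint hd]
  have hrelw : ∀ Y Z : Set M, #(Y \ Z : Set M) = #(Y₀ \ Z₀ : Set M) →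
      #(Z \ Y : Set M) = #(Z₀ \ Y₀ : Set M) → #(Y ∩ Z : Set M) = #(Y₀ ∩ Z₀ : Set M) →
      #((Y ∪ Z)ᶜ : Set M) = #((Y₀ ∪ Z₀)ᶜ : Set M) → E Y Z :=
    fun Y Z e1 e2 e3 e4 => (shape_transfer hPI e1 e2 e3 e4).mpr hEw
  intro Y Z hY hZ
  by_cases hκfin : #X < ℵ₀
  · have haf : #(Y₀ ∩ Z₀ : Set M) < ℵ₀ :=
      lt_of_le_of_lt (le_trans (self_le_add_right _ _) hap.le) hκfin
    have hqp : #(Z₀ \ Y₀ : Set M) = #(Y₀ \ Z₀ : Set M) :=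
      Cardinal.eq_of_add_eq_add_left (haq.trans hap.symm) haf
    have hκ0 : #X ≠ 0 := (zero_lt_one.trans hX).ne'
    have hp0 : #(Y₀ \ Z₀ : Set M) ≠ 0 := by
      intro h
      apply hmu
      rw [hmu', h, hqp, h, add_zero]
      exact trilt_zero_fin hκ0
    have hnad : ¬(#(Y₀ ∩ Z₀ : Set M) = 0 ∧ #((Y₀ ∪ Z₀)ᶜ : Set M) = 0) := by
      rintro ⟨h1, h2⟩
      apply hnu
      rw [hnu', h1, h2, add_zero]
      exact trilt_zero_fin hκ0
    refine fin_case hE (#X) (#(Xᶜ : Set M)) _ _ _ hκfin hκ0 hap hpd hp0 hnad ?_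
      Y Z hY.1 hY.2 hZ.1 hZ.2
    intro Y' Z' e1 e2 e3 e4
    exact hrelw Y' Z' e1 (by rw [e2, hqp]) e3 e4
  · have hκ : ℵ₀ ≤ #X := not_lt.mp hκfin
    have hplκ : #(Y₀ \ Z₀ : Set M) ≤ #X := hap ▸ self_le_add_left _ _
    have hqlκ : #(Z₀ \ Y₀ : Set M) ≤ #X := haq ▸ self_le_add_left _ _
    have halκ : #(Y₀ ∩ Z₀ : Set M) ≤ #X := hap ▸ self_le_add_right _ _
    have hmuκ : #X ≤ #(symmDiff Y₀ Z₀ : Set M) := by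
      refine ge_of_not_trilt_inf hκ ?_ hmu
      rw [hmu']
      exact (add_le_add hplκ hqlκ).trans (Cardinal.add_eq_self hκ).le
    have hpq : #(Y₀ \ Z₀ : Set M) = #X ∨ #(Z₀ \ Y₀ : Set M) = #X := by
      by_contra hcon
      push_neg at hcon
      have h1 : #(Y₀ \ Z₀ : Set M) < #X := lt_of_le_of_ne hplκ hcon.1
      have h2 : #(Z₀ \ Y₀ : Set M) < #X := lt_of_le_of_ne hqlκ hcon.2
      have hlt := Cardinal.add_lt_of_lt hκ h1 h2
      rw [← hmu'] at hlt
      exact hlt.not_ge hmuκ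
    have hcase : #(Y₀ ∩ Z₀ : Set M) = #X ∨ #((Y₀ ∪ Z₀)ᶜ : Set M) = #(Xᶜ : Set M) := by
      by_cases hd : #X ≤ #((Y₀ ∪ Z₀)ᶜ : Set M)
      · right
        have hdinf : ℵ₀ ≤ #((Y₀ ∪ Z₀)ᶜ : Set M) := hκ.trans hd
        rw [← hqd]
        exact (add_right_of_le hdinf (hqlκ.trans hd)).symm
      · left
        have hdκ : #((Y₀ ∪ Z₀)ᶜ : Set M) < #X := not_le.mp hd
        have hν : #X ≤ #((symmDiff Y₀ Z₀)ᶜ : Set M) := by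
          refine ge_of_not_trilt_inf hκ ?_ hnu
          rw [hnu']
          exact (add_le_add halκ hdκ.le).trans (Cardinal.add_eq_self hκ).le
        by_contra hne
        have h1 : #(Y₀ ∩ Z₀ : Set M) < #X := lt_of_le_of_ne halκ hne
        have hlt := Cardinal.add_lt_of_lt hκ h1 hdκ
        rw [← hnu'] at hlt
        exact hlt.not_ge hν
    rcases hpq with hpκ | hqκ
    · refine inf_case hE (#X) (#(Xᶜ : Set M)) _ _ _ hκ hXc haq hqd
        (by rw [← hpκ]; exact hpd) hcase ?_ Y Z hY.1 hY.2 hZ.1 hZ.2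
      intro Y' Z' e1 e2 e3 e4
      exact hrelw Y' Z' (by rw [e1, hpκ]) e2 e3 e4
    · refine inf_case hE (#X) (#(Xᶜ : Set M)) _ _ _ hκ hXc hap hpd
        (by rw [← hqκ]; exact hqd) hcase ?_ Y Z hY.1 hY.2 hZ.1 hZ.2
      intro Y' Z' e1 e2 e3 e4
      refine hE.symm (hrelw Z' Y' e2 (by rw [e1, hqκ]) ?_ ?_)
      · rw [Set.inter_comm Z' Y']; exact e3
      · rw [Set.union_comm Z' Y']; exact e4

end AuxClassification

/-- Lemma: classification on one side (`1 < |X| ≤ |Xᶜ|`). -/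
theorem classification_oneside {M : Type*} (E : Set M → Set M → Prop)
    (hE : Equivalence E) (hPI : PermInv E) (X : Set M)
    (hM : 2 < Cardinal.mk M)
    (hX : 1 < Cardinal.mk X) (hXc : Cardinal.mk X ≤ Cardinal.mk (Xᶜ : Set M)) :
    (TrivialSlice E X ∧ ¬ ProperlySeparative E X ∧ ¬ ProperlyComplementative E X) ∨
    (¬ TrivialSlice E X ∧ ProperlySeparative E X ∧ ¬ ProperlyComplementative E X) ∨
    (¬ TrivialSlice E X ∧ ¬ ProperlySeparative E X ∧ ProperlyComplementative E X) := by
  by_cases hT : TrivialSlice E X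
  · exact Or.inl ⟨hT, fun h => h.2 hT, fun h => h.2.2 hT⟩
  · by_cases hS : Separative E X
    · exact Or.inr (Or.inl ⟨hT, ⟨hS, hT⟩, fun h => h.2.1 hS⟩)
    · have hComp : Complementative E X := by
        by_contra hC
        unfold Complementative at hC
        push_neg at hC
        obtain ⟨Y, Z, bY, bZ, hEYZ, h1, h2⟩ := hC
        exact hT (key hE hPI X hX hXc Y Z bY bZ hEYZ h1 h2)
      exact Or.inr (Or.inr ⟨hT, fun h => hS h.1, hComp, hS, hT⟩)
end

section
/- If Cardinal.mk M > 2 and 1 < |Xᶜ| < |X| (as cardinals), and E is a permutation-invariant equivalence relation on Set M, then the bicardinal slice E(⊟)_X is exactly one of: trivial, properly separative, or properly complementative. -/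
/-!
If `|X|` is infinite, two sets `Y, Z ⊟ X` differ only inside `Yᶜ ∪ Zᶜ`, of size at most
`2|Xᶜ| < |X|`, so every slice is separative. If `|X|` is finite then so is `M`. Either `E` is the
identity on the slice, which is separative, or it relates some `Y ≠ Z ⊟ X`. Since `|Xᶜ| < |X|`,
`Y` and `Z` share a point `c`; swapping it with a point `p ∈ Y \ Z` fixes `Y`, so `Z` is
`E`-related to its image under a single transposition. Permutation invariance spreads this to every
set of the slice and every transposition, and as transpositions generate the symmetric group of
the finite set `M`, the slice is trivial. So the slice is always trivial or separative, hence never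
properly complementative.
-/

open Cardinal Equiv

namespace Equiv

variable {M : Type*}

theorem image_subtypeCongr {Y Z : Set M} [DecidablePred (· ∈ Y)] [DecidablePred (· ∈ Z)]
    (e : {x // x ∈ Y} ≃ {x // x ∈ Z}) (f : {x // x ∉ Y} ≃ {x // x ∉ Z}) :
    subtypeCongr e f '' Y = Z := by
  have hmem : ∀ x, subtypeCongr e f x ∈ Z ↔ x ∈ Y := fun x => by
    by_cases hx : x ∈ Y
    · simp [subtypeCongr, sumCompl, hx, (e ⟨x, hx⟩).2]
    · simp [subtypeCongr, sumCompl, hx, (f ⟨x, hx⟩).2]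
  ext y
  obtain ⟨x, rfl⟩ := (subtypeCongr e f).surjective y
  simp [hmem]

theorem image_swap_image [DecidableEq M] (π : Perm M) (c p : M) (Y : Set M) :
    π '' (swap c p '' Y) = swap (π c) (π p) '' (π '' Y) := by
  simp only [Set.image_image, ← Perm.mul_apply, mul_swap_eq_swap_mul]

theorem swap_image_eq_self [DecidableEq M] {Y : Set M} {a b : M} (h : a ∈ Y ↔ b ∈ Y) :
    swap a b '' Y = Y := by
  ext x
  rw [Equiv.image_eq_preimage_symm, Set.mem_preimage, symm_swap]
  rcases eq_or_ne x a with rfl | hxa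
  · simpa using h.symm
  rcases eq_or_ne x b with rfl | hxb
  · simpa using h
  · rw [swap_apply_of_ne_of_ne hxa hxb]

end Equiv

namespace Bicard

variable {M : Type*} {X Y Z : Set M}

theorem symm (h : Bicard X Y) : Bicard Y X := ⟨h.1.symm, h.2.symm⟩

theorem trans (h₁ : Bicard X Y) (h₂ : Bicard Y Z) : Bicard X Z :=
  ⟨h₁.1.trans h₂.1, h₁.2.trans h₂.2⟩

theorem image_perm (π : Perm M) (X : Set M) : Bicard (π '' X) X :=
  ⟨mk_image_eq π.injective, by rw [← π.image_compl, mk_image_eq π.injective]⟩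

theorem inter_nonempty (hY : Bicard Y X) (hZ : Bicard Z X) (hX : #(Xᶜ : Set M) < #X) :
    (Y ∩ Z).Nonempty := by
  by_contra h
  have hYZ : Y ⊆ Zᶜ := fun x hxY hxZ => h ⟨x, hxY, hxZ⟩
  have := mk_le_mk_of_subset hYZ
  rw [hY.1, hZ.2] at this
  exact this.not_gt hX

theorem exists_perm_image_eq (h : Bicard Y Z) : ∃ π : Perm M, π '' Y = Z := by
  classical
  obtain ⟨e⟩ := Cardinal.eq.mp h.1
  obtain ⟨f⟩ := Cardinal.eq.mp h.2
  exact ⟨subtypeCongr e f, image_subtypeCongr e f⟩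

theorem exists_perm_image_eq_of_mem_of_notMem (h : Bicard Y Z) {c p a b : M}
    (hc : c ∈ Y) (hp : p ∉ Y) (ha : a ∈ Z) (hb : b ∉ Z) :
    ∃ π : Perm M, π '' Y = Z ∧ π c = a ∧ π p = b := by
  classical
  obtain ⟨e⟩ := Cardinal.eq.mp h.1
  obtain ⟨f⟩ := Cardinal.eq.mp h.2
  let e' : {x // x ∈ Y} ≃ {x // x ∈ Z} := e.trans (swap (e ⟨c, hc⟩) ⟨a, ha⟩)
  let f' : {x // x ∉ Y} ≃ {x // x ∉ Z} := f.trans (swap (f ⟨p, hp⟩) ⟨b, hb⟩)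
  refine ⟨subtypeCongr e' f', image_subtypeCongr e' f', ?_, ?_⟩
  · simp [e', subtypeCongr, sumCompl, hc]
  · simp [f', subtypeCongr, sumCompl, hp]

end Bicard

theorem trilt_zero_of_ne_zero {b : Cardinal} (hb : b ≠ 0) : Trilt 0 b :=
  ⟨⟨0, zero_le⟩, fun ⟨_, h⟩ => hb (by simpa using h)⟩

theorem trilt_of_lt_of_aleph0_le {a b : Cardinal} (hb : ℵ₀ ≤ b) (h : a < b) : Trilt a b :=
  ⟨⟨1, by simpa using h.le⟩, fun ⟨n, hn⟩ =>
    hn.not_gt (mul_lt_of_lt hb ((natCast_lt_aleph0 (n := n)).trans_le hb) h)⟩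

section Slice

variable {M : Type*} {E : Set M → Set M → Prop} {X : Set M}

theorem separative_of_aleph0_le (hinf : ℵ₀ ≤ #X) (hX : #(Xᶜ : Set M) < #X) :
    Separative E X := by
  intro Y Z hY hZ _
  refine trilt_of_lt_of_aleph0_le hinf ?_
  calc #(symmDiff Y Z : Set M) ≤ #(Zᶜ ∪ Yᶜ : Set M) :=
        mk_le_mk_of_subset (Set.union_subset_union (Set.sdiff_subset_compl Y Z)
          (Set.sdiff_subset_compl Z Y))
    _ ≤ #(Zᶜ : Set M) + #(Yᶜ : Set M) := mk_union_le _ _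
    _ < #X := by rw [hY.2, hZ.2]; exact add_lt_of_lt hinf hX hX

theorem PermInv.rel_swap_image_of_rel [DecidableEq M] (hE : Equivalence E) (hPI : PermInv E)
    {Y Z : Set M} (hYZ : E Y Z) {c p : M} (hc : c ∈ Y ∩ Z) (hp : p ∈ Y \ Z) :
    E Z (swap c p '' Z) := by
  have hY : E Y (swap c p '' Z) := by
    simpa only [swap_image_eq_self (iff_of_true hc.1 hp.1)] using (hPI (swap c p) Y Z).mp hYZ
  exact hE.trans (hE.symm hYZ) hY

theorem PermInv.rel_swap_image_of_bicard [DecidableEq M] (hPI : PermInv E) {Z A : Set M}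
    {c p a b : M} (hc : c ∈ Z) (hp : p ∉ Z) (h : E Z (swap c p '' Z)) (hA : Bicard Z A)
    (ha : a ∈ A) (hb : b ∉ A) : E A (swap a b '' A) := by
  obtain ⟨π, hπ, rfl, rfl⟩ := hA.exists_perm_image_eq_of_mem_of_notMem hc hp ha hb
  simpa only [image_swap_image, hπ] using (hPI π _ _).mp h

theorem rel_perm_image_of_rel_swap_image [Finite M] [DecidableEq M] (hE : Equivalence E)
    (hswap : ∀ A, Bicard A X → ∀ a ∈ A, ∀ b ∉ A, E A (swap a b '' A)) (σ : Perm M) :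
    ∀ A, Bicard A X → E A (σ '' A) := by
  induction σ using Perm.swap_induction_on with
  | one => simpa using fun A _ => hE.refl A
  | swap_mul σ x y _ ih =>
    intro A hA
    have hσA : Bicard (σ '' A) X := (Bicard.image_perm σ A).trans hA
    have hstep : E (σ '' A) (swap x y '' (σ '' A)) := by
      by_cases hx : x ∈ σ '' A <;> by_cases hy : y ∈ σ '' A
      · rw [swap_image_eq_self (iff_of_true hx hy)]; exact hE.refl _
      · exact hswap _ hσA x hx y hy
      · rw [swap_comm]; exact hswap _ hσA y hy x hx
      · rw [swap_image_eq_self (iff_of_false hx hy)]; exact hE.refl _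
    rw [Perm.coe_mul, Set.image_comp]
    exact hE.trans (ih A hA) hstep

theorem trivialSlice_of_rel_of_ne [Finite M] (hE : Equivalence E) (hPI : PermInv E)
    (hX : #(Xᶜ : Set M) < #X) {Y Z : Set M} (hY : Bicard Y X) (hZ : Bicard Z X) (hYZ : E Y Z)
    (hne : Y ≠ Z) : TrivialSlice E X := by
  classical
  obtain ⟨W, c, p, hW, hc, hp, hWcp⟩ :
      ∃ W c p, Bicard W X ∧ c ∈ W ∧ p ∉ W ∧ E W (swap c p '' W) := by
    obtain ⟨c, hc⟩ := hY.inter_nonempty hZ hX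
    obtain ⟨p, hp | hp⟩ := Set.nonempty_iff_ne_empty.2 (symmDiff_eq_bot.not.2 hne)
    · exact ⟨Z, c, p, hZ, hc.2, hp.2, hPI.rel_swap_image_of_rel hE hYZ hc hp⟩
    · exact ⟨Y, c, p, hY, hc.1, hp.2,
        hPI.rel_swap_image_of_rel hE (hE.symm hYZ) ⟨hc.2, hc.1⟩ hp⟩
  have hswap : ∀ A, Bicard A X → ∀ a ∈ A, ∀ b ∉ A, E A (swap a b '' A) :=
    fun A hA a ha b hb => hPI.rel_swap_image_of_bicard hc hp hWcp (hW.trans hA.symm) ha hb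
  intro Y' Z' hY' hZ'
  obtain ⟨σ, rfl⟩ := (hY'.trans hZ'.symm).exists_perm_image_eq
  exact rel_perm_image_of_rel_swap_image hE hswap σ Y' hY'

theorem trivialSlice_or_separative (hE : Equivalence E) (hPI : PermInv E)
    (hX : #(Xᶜ : Set M) < #X) : TrivialSlice E X ∨ Separative E X := by
  rcases lt_or_ge #X ℵ₀ with hfin | hinf
  · have : Finite M := by
      rw [← mk_lt_aleph0_iff, ← mk_sum_compl X]
      exact add_lt_aleph0 hfin (hX.trans hfin)
    by_cases h : ∃ Y Z, Bicard Y X ∧ Bicard Z X ∧ E Y Z ∧ Y ≠ Z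
    · obtain ⟨Y, Z, hY, hZ, hYZ, hne⟩ := h
      exact Or.inl (trivialSlice_of_rel_of_ne hE hPI hX hY hZ hYZ hne)
    · push Not at h
      refine Or.inr fun Y Z hY hZ hYZ => ?_
      rw [h Y Z hY hZ hYZ, symmDiff_self, Set.bot_eq_empty, mk_eq_zero]
      exact trilt_zero_of_ne_zero (zero_le.trans_lt hX).ne'
  · exact Or.inr (separative_of_aleph0_le hinf hX)

end Slice

theorem classification_otherside_general {M : Type*} (E : Set M → Set M → Prop)
    (hE : Equivalence E) (hPI : PermInv E) (X : Set M)
    (hX : Cardinal.mk (Xᶜ : Set M) < Cardinal.mk X) :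
    (TrivialSlice E X ∧ ¬ ProperlySeparative E X ∧ ¬ ProperlyComplementative E X) ∨
    (¬ TrivialSlice E X ∧ ProperlySeparative E X ∧ ¬ ProperlyComplementative E X) ∨
    (¬ TrivialSlice E X ∧ ¬ ProperlySeparative E X ∧ ProperlyComplementative E X) := by
  by_cases hT : TrivialSlice E X
  · exact Or.inl ⟨hT, fun h => h.2 hT, fun h => h.2.2 hT⟩
  · have hS : Separative E X := (trivialSlice_or_separative hE hPI hX).resolve_left hT
    exact Or.inr (Or.inl ⟨hT, ⟨hS, hT⟩, fun h => h.2.1 hS⟩)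

/-- Corollary: classification on the other side (`1 < |Xᶜ| < |X|`). -/
theorem classification_otherside {M : Type*} (E : Set M → Set M → Prop)
    (hE : Equivalence E) (hPI : PermInv E) (X : Set M)
    (hM : 2 < Cardinal.mk M)
    (hXc : 1 < Cardinal.mk (Xᶜ : Set M)) (hX : Cardinal.mk (Xᶜ : Set M) < Cardinal.mk X) :
    (TrivialSlice E X ∧ ¬ ProperlySeparative E X ∧ ¬ ProperlyComplementative E X) ∨
    (¬ TrivialSlice E X ∧ ProperlySeparative E X ∧ ¬ ProperlyComplementative E X) ∨
    (¬ TrivialSlice E X ∧ ¬ ProperlySeparative E X ∧ ProperlyComplementative E X) :=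
  classification_otherside_general E hE hPI X hX
end

section
/- Let E be a permutation-invariant equivalence relation on Set M. Suppose Y ≠ X, E X Y, Z ⊆ (X ∪ Y)ᶜ, and f : M → M restricts to an injection of Z into X ∩ Y (Set.InjOn f Z and f '' Z ⊆ X ∩ Y). Suppose further that |Z| ⊴ |X \ Y| or |Z| ⊴ |Y \ X|. Then there is a bijection π : M ≃ M such that E (π '' X) X, Z ⊆ π '' (X ∩ Y), and for every x : M, π x ≠ x if and only if x ∈ Z ∪ f '' Z. -/
open Set Cardinal Equiv

section

variable {M : Type*}

def Interchanges (π : Perm M) (A B : Set M) : Prop :=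
  π '' A = B ∧ π '' B = A ∧ ∀ x ∉ A ∪ B, π x = x

theorem exists_interchanges {A B : Set M} (hAB : Disjoint A B) (hcard : #A = #B) :
    ∃ π : Perm M, Interchanges π A B := by
  classical
  obtain ⟨e⟩ := Cardinal.eq.1 hcard
  let σ : Perm ↥(A ∪ B) := ((Equiv.Set.union hAB).trans
    ((Equiv.sumComm A B).trans (e.symm.sumCongr e))).trans (Equiv.Set.union hAB).symm
  have hA : ∀ a : A, Perm.ofSubtype σ a = e a := fun a ↦ by
    rw [Perm.ofSubtype_apply_of_mem σ (Or.inl a.2)]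
    simp [σ, Equiv.Set.union_apply_left hAB (a := ⟨a, Or.inl a.2⟩) a.2]
  have hB : ∀ b : B, Perm.ofSubtype σ b = e.symm b := fun b ↦ by
    rw [Perm.ofSubtype_apply_of_mem σ (Or.inr b.2)]
    simp [σ, Equiv.Set.union_apply_right hAB (a := ⟨b, Or.inr b.2⟩) b.2]
  refine ⟨Perm.ofSubtype σ, ?_, ?_, fun x hx ↦ Perm.ofSubtype_apply_of_not_mem σ hx⟩
  · ext x
    refine ⟨?_, fun hx ↦ ⟨e.symm ⟨x, hx⟩, (e.symm _).2, by simp [hA (e.symm ⟨x, hx⟩)]⟩⟩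
    rintro ⟨a, ha, rfl⟩
    exact hA ⟨a, ha⟩ ▸ (e _).2
  · ext x
    refine ⟨?_, fun hx ↦ ⟨e ⟨x, hx⟩, (e _).2, by simp [hB (e ⟨x, hx⟩)]⟩⟩
    rintro ⟨b, hb, rfl⟩
    exact hB ⟨b, hb⟩ ▸ (e.symm _).2

namespace Interchanges

variable {π : Perm M} {A B S : Set M}

theorem image_eq_sdiff_union (h : Interchanges π A B) (hA : A ⊆ S) (hB : Disjoint B S) :
    π '' S = S \ A ∪ B := by
  have hfix : π '' (S \ A) = S \ A := EqOn.image_eq_self fun x hx ↦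
    h.2.2 x fun hAB ↦ hAB.elim hx.2 fun hxB ↦ disjoint_left.1 hB hxB hx.1
  rw [← union_sdiff_cancel hA, image_union, h.1, hfix, union_sdiff_cancel hA, union_comm]

theorem image_eq_self_of_union_subset (h : Interchanges π A B) (hS : A ∪ B ⊆ S) :
    π '' S = S := by
  have hfix : π '' (S \ (A ∪ B)) = S \ (A ∪ B) := EqOn.image_eq_self fun x hx ↦ h.2.2 x hx.2
  rw [← union_sdiff_cancel hS, image_union, image_union, h.1, h.2.1, hfix, union_comm B]

theorem image_eq_self_of_disjoint (h : Interchanges π A B) (hS : Disjoint (A ∪ B) S) :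
    π '' S = S :=
  EqOn.image_eq_self fun x hx ↦ h.2.2 x (disjoint_right.1 hS hx)

theorem apply_ne_iff (h : Interchanges π A B) (hAB : Disjoint A B) {x : M} :
    π x ≠ x ↔ x ∈ A ∪ B := by
  refine ⟨not_imp_comm.1 (h.2.2 x), ?_⟩
  rintro (hx | hx) hπx
  · exact disjoint_left.1 hAB hx (hπx ▸ h.1 ▸ mem_image_of_mem π hx)
  · exact disjoint_right.1 hAB hx (hπx ▸ h.2.1 ▸ mem_image_of_mem π hx)

end Interchanges

theorem PermInv.rel_sdiff_union {E : Set M → Set M → Prop} (hPI : PermInv E) {S T A B : Set M}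
    (hST : E S T) (hA : A ⊆ S) (hB : Disjoint B S) (hcard : #A = #B)
    (hT : A ∪ B ⊆ T ∨ Disjoint (A ∪ B) T) : E (S \ A ∪ B) T := by
  obtain ⟨π, hπ⟩ := exists_interchanges (hB.mono_right hA).symm hcard
  have hπT : π '' T = T := hT.elim hπ.image_eq_self_of_union_subset hπ.image_eq_self_of_disjoint
  have := (hPI π S T).1 hST
  rwa [hπ.image_eq_sdiff_union hA hB, hπT] at this

theorem PermInv.rel_sdiff_union_of_sdiff_left {E : Set M → Set M → Prop} (hE : Equivalence E)
    (hPI : PermInv E) {X Y S U V W : Set M} (hXY : E X Y) (hS : E S X)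
    (hU : U ⊆ S ∩ (X ∩ Y)) (hV : V ⊆ S ∩ (X \ Y)) (hW : Disjoint W (S ∪ Y))
    (hUW : #U = #W) (hVW : #V = #W) : E (S \ U ∪ W) X := by
  simp only [subset_def, disjoint_left, mem_union, mem_inter_iff, mem_sdiff] at hU hV hW
  have hVY : E (S \ V ∪ W) Y :=
    hPI.rel_sdiff_union (hE.trans hS hXY) (by grind) (by grind) hVW (.inr <| by grind)
  have hUX : E ((S \ V ∪ W) \ U ∪ V) X := hPI.rel_sdiff_union (hE.trans hVY (hE.symm hXY))
    (by grind) (by grind) (hUW.trans hVW.symm) (.inl <| by grind)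
  rwa [show (S \ V ∪ W) \ U ∪ V = S \ U ∪ W by grind] at hUX

theorem PermInv.rel_sdiff_union_of_sdiff_right {E : Set M → Set M → Prop} (hE : Equivalence E)
    (hPI : PermInv E) {X Y S U V W : Set M} (hXY : E X Y) (hS : E S X)
    (hU : U ⊆ S ∩ Y) (hV : V ⊆ Y \ (S ∪ X)) (hW : Disjoint W (S ∪ X ∪ Y))
    (hUW : #U = #W) (hVW : #V = #W) : E (S \ U ∪ W) X := by
  simp only [subset_def, disjoint_left, mem_union, mem_inter_iff, mem_sdiff] at hU hV hW
  have hUY : E (S \ U ∪ V) Y := hPI.rel_sdiff_union (hE.trans hS hXY) (by grind) (by grind)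
    (hUW.trans hVW.symm) (.inl <| by grind)
  have hVX : E ((S \ U ∪ V) \ V ∪ W) X :=
    hPI.rel_sdiff_union (hE.trans hUY (hE.symm hXY)) (by grind) (by grind) hVW (.inr <| by grind)
  rwa [show (S \ U ∪ V) \ V ∪ W = S \ U ∪ W by grind] at hVX

theorem PermInv.rel_sdiff_image_union_union {E : Set M → Set M → Prop} (hE : Equivalence E)
    (hPI : PermInv E) {X Y Z W : Set M} {f : M → M} (hXY : E X Y) (hZW : Disjoint Z W)
    (hout : Z ∪ W ⊆ (X ∪ Y)ᶜ) (hinj : InjOn f (Z ∪ W)) (hf : f '' (Z ∪ W) ⊆ X ∩ Y)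
    (hW : #W ≤ #(X \ Y : Set M) ∨ #W ≤ #(Y \ X : Set M)) (hZ : E (X \ f '' Z ∪ Z) X) :
    E (X \ f '' (Z ∪ W) ∪ (Z ∪ W)) X := by
  have hfW : #(f '' W) = #W := mk_image_eq_of_injOn f W (hinj.mono subset_union_right)
  have hfZW : Disjoint (f '' Z) (f '' W) := by
    rw [disjoint_iff_inter_eq_empty, ← hinj.image_inter subset_union_left subset_union_right,
      hZW.inter_eq, image_empty]
  rw [image_union] at hf ⊢
  generalize f '' Z = F at *
  generalize f '' W = U at *
  rw [show X \ (F ∪ U) ∪ (Z ∪ W) = (X \ F ∪ Z) \ U ∪ W by grind]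
  simp only [subset_def, disjoint_left, mem_union, mem_inter_iff, mem_compl_iff]
    at hZW hout hf hfZW
  rcases hW with hW | hW
  · obtain ⟨V, hVXY, hVW⟩ := le_mk_iff_exists_subset.1 hW
    exact hPI.rel_sdiff_union_of_sdiff_left hE hXY hZ (by grind) (by grind) (by grind) hfW hVW
  · obtain ⟨V, hVYX, hVW⟩ := le_mk_iff_exists_subset.1 hW
    exact hPI.rel_sdiff_union_of_sdiff_right hE hXY hZ (by grind) (by grind) (by grind) hfW hVW

theorem Trile.set_induction {Z D : Set M} {P : Set M → Prop} (h : Trile #Z #D) (empty : P ∅)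
    (union : ∀ Z' W, Z' ∪ W ⊆ Z → Disjoint Z' W → #W ≤ #D → P Z' → P (Z' ∪ W)) : P Z := by
  obtain ⟨n, hn⟩ := h
  obtain ⟨e⟩ : Nonempty (Z ↪ Fin n × D) := by
    rw [← Cardinal.le_def]; simpa [mk_prod] using hn
  let piece (p : ℕ → Prop) : Set M := Subtype.val '' {z : Z | p (e z).1}
  have hpiece : ∀ k, P (piece (· < k)) := by
    intro k
    induction k with
    | zero => simpa [piece] using empty
    | succ k ih =>
      have hunion : piece (· < k + 1) = piece (· < k) ∪ piece (· = k) := by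
        simp only [piece, ← image_union, ← ofPred_or, Nat.lt_succ_iff_lt_or_eq]
      rw [hunion]
      refine union _ _ (union_subset (Subtype.coe_image_subset _ _)
        (Subtype.coe_image_subset _ _)) ?_ ?_ ih
      · refine (disjoint_image_iff Subtype.val_injective).2 (disjoint_left.2 fun z h₁ h₂ ↦ ?_)
        simp only [mem_ofPred_eq] at h₁ h₂
        omega
      · rw [mk_image_eq Subtype.val_injective]
        refine mk_le_of_injective (f := fun z ↦ (e z).2) fun z₁ z₂ h ↦ Subtype.ext (e.injective ?_)
        exact Prod.ext (Fin.ext (z₁.2.trans z₂.2.symm)) h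
  simpa [piece] using hpiece n

end

theorem shuttle_into_inter_general {M : Type*} (E : Set M → Set M → Prop)
    (hE : Equivalence E) (hPI : PermInv E) (X Y Z : Set M) (f : M → M)
    (hEXY : E X Y) (hZ : Z ⊆ (X ∪ Y)ᶜ)
    (hfinj : Set.InjOn f Z) (hfZ : f '' Z ⊆ X ∩ Y)
    (hcard : Trile (Cardinal.mk Z) (Cardinal.mk (X \ Y : Set M)) ∨
             Trile (Cardinal.mk Z) (Cardinal.mk (Y \ X : Set M))) :
    ∃ π : M ≃ M, E (π '' X) X ∧ Z ⊆ π '' (X ∩ Y) ∧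
      ∀ x : M, π x ≠ x ↔ x ∈ Z ∪ f '' Z := by
  have hshuttle : E (X \ f '' Z ∪ Z) X := by
    have base : E (X \ f '' ∅ ∪ ∅) X := by simpa using hE.refl X
    have step : ∀ Z' W, Z' ∪ W ⊆ Z → Disjoint Z' W →
        (#W ≤ #(X \ Y : Set M) ∨ #W ≤ #(Y \ X : Set M)) →
        E (X \ f '' Z' ∪ Z') X → E (X \ f '' (Z' ∪ W) ∪ (Z' ∪ W)) X :=
      fun Z' W hsub hZW ↦ hPI.rel_sdiff_image_union_union hE hEXY hZW (hsub.trans hZ)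
        (hfinj.mono hsub) ((image_mono hsub).trans hfZ)
    rcases hcard with h | h
    · exact h.set_induction base fun Z' W hsub hZW hW ↦ step Z' W hsub hZW (.inl hW)
    · exact h.set_induction base fun Z' W hsub hZW hW ↦ step Z' W hsub hZW (.inr hW)
  have hZX : Disjoint Z X := disjoint_left.2 fun x hx hxX ↦ hZ hx (.inl hxX)
  have hfZZ : Disjoint (f '' Z) Z :=
    disjoint_left.2 fun x hx hxZ ↦ disjoint_left.1 hZX hxZ (hfZ hx).1
  obtain ⟨π, hπ⟩ := exists_interchanges hfZZ (mk_image_eq_of_injOn f Z hfinj)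
  refine ⟨π, ?_, ?_, fun x ↦ by rw [hπ.apply_ne_iff hfZZ, union_comm]⟩
  · rwa [hπ.image_eq_sdiff_union (hfZ.trans inter_subset_left) hZX]
  · rw [hπ.image_eq_sdiff_union hfZ (hZX.mono_right inter_subset_left)]
    exact subset_union_right

/-- Lemma (shuttling into `X ∩ Y`). -/
theorem shuttle_into_inter {M : Type*} (E : Set M → Set M → Prop)
    (hE : Equivalence E) (hPI : PermInv E) (X Y Z : Set M) (f : M → M)
    (hYX : Y ≠ X) (hEXY : E X Y) (hZ : Z ⊆ (X ∪ Y)ᶜ)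
    (hfinj : Set.InjOn f Z) (hfZ : f '' Z ⊆ X ∩ Y)
    (hcard : Trile (Cardinal.mk Z) (Cardinal.mk (X \ Y : Set M)) ∨
             Trile (Cardinal.mk Z) (Cardinal.mk (Y \ X : Set M))) :
    ∃ π : M ≃ M, E (π '' X) X ∧ Z ⊆ π '' (X ∩ Y) ∧
      ∀ x : M, π x ≠ x ↔ x ∈ Z ∪ f '' Z :=
  shuttle_into_inter_general E hE hPI X Y Z f hEXY hZ hfinj hfZ hcard
end

section
/- If Y ⊟ X, Z ⊟ X, and Y, Z are symmetric, then |Y △ Z| ◁ |X|. -/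
/-- `Y` and `Z` are symmetric. -/
def SymmetricPair {M : Type*} (Y Z : Set M) : Prop :=
  Cardinal.mk Y = Cardinal.mk Z ∧
  ∃ H : Set M, H ≠ Y ∧ H ≠ Z ∧ Cardinal.mk H = Cardinal.mk Y ∧
    ¬ Trile (Cardinal.mk (H \ (Y ∪ Z) : Set M)) (Cardinal.mk (Y \ Z : Set M)) ∧
    ¬ Trile (Cardinal.mk (H \ (Y ∪ Z) : Set M)) (Cardinal.mk (Z \ Y : Set M))

/-!
Both halves of `Y △ Z` lie in sets of size `|X|`, so `|Y △ Z| ⊴ |X|`. Conversely, if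
`|X| ⊴ |Y △ Z|`, then the witness `H` of symmetry, being of size `|X|`, would satisfy
`|H \ (Y ∪ Z)| ⊴ |Y \ Z| + |Z \ Y|`, and a sum is dominated by twice its larger summand, so
`|H \ (Y ∪ Z)|` would be `⊴` one of `|Y \ Z|`, `|Z \ Y|`.
-/

open Cardinal

namespace Trile

theorem of_le {a b : Cardinal} (h : a ≤ b) : Trile a b :=
  ⟨1, by simpa using h⟩

theorem trans {a b c : Cardinal} (hab : Trile a b) (hbc : Trile b c) : Trile a c := by
  obtain ⟨m, hm⟩ := hab
  obtain ⟨n, hn⟩ := hbc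
  refine ⟨m * n, hm.trans ?_⟩
  rw [Nat.cast_mul, mul_assoc]
  exact mul_le_mul_right hn _

theorem add {a b c : Cardinal} (ha : Trile a c) (hb : Trile b c) : Trile (a + b) c := by
  obtain ⟨m, hm⟩ := ha
  obtain ⟨n, hn⟩ := hb
  refine ⟨m + n, ?_⟩
  rw [Nat.cast_add, add_mul]
  exact add_le_add hm hn

theorem add_self (a : Cardinal) : Trile (a + a) a :=
  ⟨2, by rw [Nat.cast_ofNat, two_mul]⟩

theorem or_of_trile_add {a b c : Cardinal} (h : Trile c (a + b)) : Trile c a ∨ Trile c b := by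
  rcases le_total a b with hab | hba
  · exact .inr (h.trans ((of_le (add_le_add_left hab b)).trans (add_self b)))
  · exact .inl (h.trans ((of_le (add_le_add_right hba a)).trans (add_self a)))

end Trile

theorem Cardinal.mk_symmDiff_le {α : Type*} (s t : Set α) :
    #(symmDiff s t : Set α) ≤ #(s \ t : Set α) + #(t \ s : Set α) := by
  rw [Set.symmDiff_def]
  exact mk_union_le _ _

theorem Cardinal.mk_diff_le {α : Type*} (s t : Set α) : #(s \ t : Set α) ≤ #s :=
  mk_le_mk_of_subset Set.sdiff_subset

/-- Symmetric pairs in a bicardinal slice have small symmetric difference. -/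
theorem symmetric_small_symmDiff {M : Type*} (X Y Z : Set M)
    (hY : Bicard Y X) (hZ : Bicard Z X) (hSym : SymmetricPair Y Z) :
    Trilt (Cardinal.mk (symmDiff Y Z : Set M)) (Cardinal.mk X) := by
  obtain ⟨hYX, -⟩ := hY
  obtain ⟨hZX, -⟩ := hZ
  obtain ⟨-, H, -, -, hHY, hH_not_le_YZ, hH_not_le_ZY⟩ := hSym
  have hsplit : Trile #(symmDiff Y Z : Set M) (#(Y \ Z : Set M) + #(Z \ Y : Set M)) :=
    Trile.of_le (mk_symmDiff_le Y Z)
  refine ⟨hsplit.trans (.add ?_ ?_), fun hX => ?_⟩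
  · exact .of_le (hYX ▸ mk_diff_le Y Z)
  · exact .of_le (hZX ▸ mk_diff_le Z Y)
  · have hH : Trile #(H \ (Y ∪ Z) : Set M) (#(Y \ Z : Set M) + #(Z \ Y : Set M)) :=
      (Trile.of_le ((hHY.trans hYX) ▸ mk_diff_le H (Y ∪ Z))).trans (hX.trans hsplit)
    exact (Trile.or_of_trile_add hH).elim hH_not_le_YZ hH_not_le_ZY
end

section
/- If Y ⊟ X, Z ⊟ X, and Y, Z are almost complementary, then |Y ∩ Z| ◁ |X| and |(Y ∪ Z)ᶜ| ◁ |X|. -/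
/-- `Y` and `Z` are almost complementary. -/
def AlmostComplementary {M : Type*} (Y Z : Set M) : Prop :=
  Cardinal.mk Y = Cardinal.mk Z ∧
  ¬ Trile (Cardinal.mk (Z \ Y : Set M)) (Cardinal.mk (Y ∩ Z : Set M)) ∧
  ¬ Trile (Cardinal.mk (Y \ Z : Set M)) (Cardinal.mk (Y ∩ Z : Set M)) ∧
  ¬ Trile (Cardinal.mk (Y \ Z : Set M)) (Cardinal.mk ((Y ∪ Z)ᶜ : Set M)) ∧
  ¬ Trile (Cardinal.mk (Z \ Y : Set M)) (Cardinal.mk ((Y ∪ Z)ᶜ : Set M))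

/-- Almost complementary pairs in a bicardinal slice have small intersection and
small complement of union. -/
theorem almost_complementary_small {M : Type*} (X Y Z : Set M)
    (hY : Bicard Y X) (hZ : Bicard Z X) (hAC : AlmostComplementary Y Z) :
    Trilt (Cardinal.mk (Y ∩ Z : Set M)) (Cardinal.mk X) ∧
      Trilt (Cardinal.mk ((Y ∪ Z)ᶜ : Set M)) (Cardinal.mk X) := by
  obtain ⟨_, hZY_a, hYZ_a, hYZ_d, hZY_d⟩ := hAC
  have hp : Cardinal.mk (Y \ Z : Set M) ≤ Cardinal.mk X :=
    (Cardinal.mk_le_mk_of_subset (Set.diff_subset)).trans hY.1.le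
  have ha : Cardinal.mk (Y ∩ Z : Set M) ≤ Cardinal.mk X :=
    (Cardinal.mk_le_mk_of_subset (Set.inter_subset_left)).trans hY.1.le
  have hd : Cardinal.mk ((Y ∪ Z)ᶜ : Set M) ≤ Cardinal.mk X := by
    rcases le_total (Cardinal.mk ((Y ∪ Z)ᶜ : Set M)) (Cardinal.mk X) with h | h
    · exact h
    · exact absurd ⟨1, by simpa using hp.trans h⟩ hYZ_d
  constructor
  · refine ⟨⟨1, by simpa using ha⟩, fun ⟨n, hn⟩ => hYZ_a ⟨n, hp.trans hn⟩⟩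
  · refine ⟨⟨1, by simpa using hd⟩, fun ⟨n, hn⟩ => hYZ_d ⟨n, hp.trans hn⟩⟩
end

section
/- Bad-company theorem: let E be a permutation-invariant equivalence relation on Set M and ∂ : Set M → M an abstraction operator for E. Then there is no X : Set M with 2 < |X| = |Xᶜ| (as cardinals) such that the bicardinal slice E(⊟)_X is nontrivial. -/
open Cardinal Set


section Perm
variable {M : Type u}

/-- Four-region cardinal matching gives a permutation carrying the pair `(P,Q)` to `(P',Q')`. -/
lemma exists_perm_of_regions (P Q P' Q' : Set M)
    (h1 : #(↥(P ∩ Q)) = #(↥(P' ∩ Q')))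
    (h2 : #(↥(P \ Q)) = #(↥(P' \ Q')))
    (h3 : #(↥(Q \ P)) = #(↥(Q' \ P')))
    (h4 : #(↥((P ∪ Q)ᶜ)) = #(↥((P' ∪ Q')ᶜ))) :
    ∃ π : M ≃ M, π '' P = P' ∧ π '' Q = Q' := by
  classical
  set c : M → Bool × Bool := fun x => (decide (x ∈ P), decide (x ∈ Q)) with hc
  set c' : M → Bool × Bool := fun x => (decide (x ∈ P'), decide (x ∈ Q')) with hc'
  have fib : ∀ i : Bool × Bool, Nonempty ((c ⁻¹' {i}) ≃ (c' ⁻¹' {i})) := by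
    rintro ⟨(_|_), (_|_)⟩
    · refine Cardinal.eq.mp ?_
      have e1 : c ⁻¹' {(false, false)} = (P ∪ Q)ᶜ := by
        ext x; simp [hc, Prod.ext_iff]
      have e2 : c' ⁻¹' {(false, false)} = (P' ∪ Q')ᶜ := by
        ext x; simp [hc', Prod.ext_iff]
      rw [e1, e2]; exact h4
    · refine Cardinal.eq.mp ?_
      have e1 : c ⁻¹' {(false, true)} = Q \ P := by
        ext x; simp [hc, Prod.ext_iff]; tauto
      have e2 : c' ⁻¹' {(false, true)} = Q' \ P' := by
        ext x; simp [hc', Prod.ext_iff]; tauto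
      rw [e1, e2]; exact h3
    · refine Cardinal.eq.mp ?_
      have e1 : c ⁻¹' {(true, false)} = P \ Q := by
        ext x; simp [hc, Prod.ext_iff]
      have e2 : c' ⁻¹' {(true, false)} = P' \ Q' := by
        ext x; simp [hc', Prod.ext_iff]
      rw [e1, e2]; exact h2
    · refine Cardinal.eq.mp ?_
      have e1 : c ⁻¹' {(true, true)} = P ∩ Q := by
        ext x; simp [hc, Prod.ext_iff]
      have e2 : c' ⁻¹' {(true, true)} = P' ∩ Q' := by
        ext x; simp [hc', Prod.ext_iff]
      rw [e1, e2]; exact h1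
  let F : ∀ i : Bool × Bool, (c ⁻¹' {i}) ≃ (c' ⁻¹' {i}) := fun i => (fib i).some
  let π : M ≃ M :=
    (Equiv.sigmaFiberEquiv c).symm.trans
      ((Equiv.sigmaCongrRight F).trans (Equiv.sigmaFiberEquiv c'))
  have key : ∀ x, c' (π x) = c x := by
    intro x
    have hx : π x = ((F (c x)) ⟨x, rfl⟩ : M) := rfl
    rw [hx]
    exact ((F (c x)) ⟨x, rfl⟩).2
  have hP : ∀ x, x ∈ P ↔ π x ∈ P' := by
    intro x
    have := congrArg Prod.fst (key x)
    simpa [hc, hc', decide_eq_decide] using this.symm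
  have hQ : ∀ x, x ∈ Q ↔ π x ∈ Q' := by
    intro x
    have := congrArg Prod.snd (key x)
    simpa [hc, hc', decide_eq_decide] using this.symm
  have himg : ∀ (A : Set M) (A' : Set M), (∀ x, x ∈ A ↔ π x ∈ A') → π '' A = A' := by
    intro A A' h
    ext y
    constructor
    · rintro ⟨x, hx, rfl⟩; exact (h x).mp hx
    · intro hy
      exact ⟨π.symm y, (h _).mpr (by simpa using hy), π.apply_symm_apply y⟩
  exact ⟨π, himg P P' hP, himg Q Q' hQ⟩

end Perm

section Main
variable {M : Type u} {E : Set M → Set M → Prop}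

lemma E_const_on_type (hPI : PermInv E) (P Q P' Q' : Set M)
    (h1 : #(↥(P ∩ Q)) = #(↥(P' ∩ Q')))
    (h2 : #(↥(P \ Q)) = #(↥(P' \ Q')))
    (h3 : #(↥(Q \ P)) = #(↥(Q' \ P')))
    (h4 : #(↥((P ∪ Q)ᶜ)) = #(↥((P' ∪ Q')ᶜ))) :
    E P Q ↔ E P' Q' := by
  obtain ⟨π, hπ1, hπ2⟩ := exists_perm_of_regions P Q P' Q' h1 h2 h3 h4
  rw [hPI π P Q, hπ1, hπ2]

lemma three_elems {α : Type u} (h : 2 < #α) (a b : α) : ∃ c : α, c ≠ a ∧ c ≠ b := by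
  by_contra hco
  push_neg at hco
  have huniv : (Set.univ : Set α) = {a, b} := by
    apply Set.eq_of_subset_of_subset
    · intro x _
      rcases Classical.em (x = a) with h1 | h1
      · exact Or.inl h1
      · exact Or.inr (hco x h1)
    · exact Set.subset_univ _
  have : #α ≤ 2 := by
    rw [← Cardinal.mk_univ, huniv]
    calc #(↥({a, b} : Set α)) ≤ #(↥({b} : Set α)) + 1 := Cardinal.mk_insert_le
    _ ≤ 1 + 1 := by
        gcongr
        exact le_of_eq (Cardinal.mk_singleton b)
    _ = 2 := one_add_one_eq_two
  exact absurd h (not_lt.mpr this)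

lemma allk_equiv (hE : Equivalence E) (hPI : PermInv E) (ab : Set M → M)
    (hab : ∀ X Y : Set M, ab X = ab Y ↔ E X Y) {κ : Cardinal.{u}}
    (hκ2 : 2 < κ) (hκinf : ℵ₀ ≤ κ) (hM : #M = κ)
    (P Q : Set M)
    (c1 : #(↥(P ∩ Q)) = κ) (c2 : #(↥(P \ Q)) = κ)
    (c3 : #(↥(Q \ P)) = κ) (c4 : #(↥((P ∪ Q)ᶜ)) = κ) :
    E P Q := by
  by_contra hne
  set T := ↥(P ∩ Q) with hTdef
  have hT : #T = κ := c1
  have hσ : #(Option T × T × T) = κ := by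
    simp only [Cardinal.mk_prod, Cardinal.mk_option, Cardinal.lift_id, hT]
    rw [Cardinal.add_one_eq hκinf, Cardinal.mul_eq_self hκinf, Cardinal.mul_eq_self hκinf]
  obtain ⟨e⟩ : Nonempty (Option T × T × T ≃ M) := Cardinal.eq.mp (hσ.trans hM.symm)
  set S : (T → T) → Set (Option T × T × T) :=
    fun f => {p | ∀ x, p.1 = some x → p.2.1 = f x} with hS
  have sandwich : ∀ (A : Set (Option T × T × T)) (h : T → Option T × T × T),
      Function.Injective h → Set.range h ⊆ A → #(↥A) = κ := by
    intro A h hinj hsub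
    refine le_antisymm (le_of_le_of_eq (Cardinal.mk_set_le A) hσ) ?_
    calc κ = #T := hT.symm
    _ = #(↥(Set.range h)) := (Cardinal.mk_range_eq h hinj).symm
    _ ≤ #(↥A) := Cardinal.mk_le_mk_of_subset hsub
  have core : ∀ f g : T → T, #(↥(S f ∩ S g)) = κ := by
    intro f g
    have hp : #(T × T) = κ := by
      simp only [Cardinal.mk_prod, Cardinal.lift_id, hT, Cardinal.mul_eq_self hκinf]
    refine le_antisymm (le_of_le_of_eq (Cardinal.mk_set_le _) hσ) ?_
    have hinj : Function.Injective (fun yz : T × T => ((none, yz.1, yz.2) : Option T × T × T)) := by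
      intro a b hab'
      simpa [Prod.ext_iff] using hab'
    have hsub : Set.range (fun yz : T × T => ((none, yz.1, yz.2) : Option T × T × T)) ⊆ S f ∩ S g := by
      rintro p ⟨yz, rfl⟩
      constructor <;> · intro x hx; simp at hx
    calc κ = #(T × T) := hp.symm
    _ = #(↥(Set.range (fun yz : T × T => ((none, yz.1, yz.2) : Option T × T × T)))) :=
        (Cardinal.mk_range_eq _ hinj).symm
    _ ≤ _ := Cardinal.mk_le_mk_of_subset hsub
  have memS : ∀ (f : T → T) (x y z : T), ((some x, y, z) : Option T × T × T) ∈ S f ↔ y = f x := by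
    intro f x y z
    constructor
    · intro h; exact h x rfl
    · intro h x' hx'
      obtain rfl : x = x' := by simpa using hx'
      exact h
  have hinj3 : ∀ (u : Option T) (v : T), Function.Injective
      (fun z : T => ((u, v, z) : Option T × T × T)) := by
    intro u v a b hab'
    simpa [Prod.ext_iff] using hab'
  have hVinj : Function.Injective (fun f : T → T => ab (e '' S f)) := by
    intro f g hfg
    by_contra hne'
    obtain ⟨x₀, hx₀⟩ : ∃ x, f x ≠ g x := by
      by_contra hc
      push_neg at hc
      exact hne' (funext hc)
    obtain ⟨y₀, hy₀f, hy₀g⟩ := three_elems (lt_of_lt_of_eq hκ2 hT.symm) (f x₀) (g x₀)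
    have d1 : #(↥(S f \ S g)) = κ := by
      refine sandwich _ (fun z => ((some x₀, f x₀, z))) (hinj3 _ _) ?_
      rintro p ⟨z, rfl⟩
      refine ⟨(memS f x₀ (f x₀) z).mpr rfl, ?_⟩
      intro hmem
      exact hx₀ ((memS g x₀ (f x₀) z).mp hmem)
    have d2 : #(↥(S g \ S f)) = κ := by
      refine sandwich _ (fun z => ((some x₀, g x₀, z))) (hinj3 _ _) ?_
      rintro p ⟨z, rfl⟩
      refine ⟨(memS g x₀ (g x₀) z).mpr rfl, ?_⟩
      intro hmem
      exact hx₀ ((memS f x₀ (g x₀) z).mp hmem).symm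
    have d4 : #(↥((S f ∪ S g)ᶜ)) = κ := by
      refine sandwich _ (fun z => ((some x₀, y₀, z))) (hinj3 _ _) ?_
      rintro p ⟨z, rfl⟩
      intro hmem
      rcases hmem with hmem | hmem
      · exact hy₀f ((memS f x₀ y₀ z).mp hmem)
      · exact hy₀g ((memS g x₀ y₀ z).mp hmem)
    have hEV : E (e '' S f) (e '' S g) := (hab _ _).mp hfg
    have himg : ∀ A : Set (Option T × T × T), #(↥(e '' A)) = #(↥A) :=
      fun A => Cardinal.mk_image_eq e.injective
    have htrans : E P Q := by
      rw [← E_const_on_type hPI (e '' S f) (e '' S g) P Q ?_ ?_ ?_ ?_]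
      · exact hEV
      · rw [← Set.image_inter e.injective, himg, core f g, c1]
      · rw [← Set.image_diff e.injective, himg, d1, c2]
      · rw [← Set.image_diff e.injective, himg, d2, c3]
      · rw [← Set.image_union, ← Set.image_compl_eq e.bijective, himg, d4, c4]
    exact hne htrans
  have hle : #(T → T) ≤ #M := Cardinal.mk_le_of_injective hVinj
  have hpow : #(T → T) = κ ^ κ := by
    rw [← Cardinal.power_def, hT]
  rw [hpow, hM] at hle
  have : κ < κ ^ κ :=
    lt_of_lt_of_le (Cardinal.cantor κ) (Cardinal.power_le_power_right hκ2.le)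
  exact absurd hle (not_le.mpr this)

end Main

section Half
variable {M : Type u}

lemma exists_half (R : Set M) (hR : ℵ₀ ≤ #(↥R)) :
    ∃ H, H ⊆ R ∧ #(↥H) = #(↥R) ∧ #(↥(R \ H)) = #(↥R) := by
  have hsum : #(↥R ⊕ ↥R) = #(↥R) := by
    rw [Cardinal.mk_sum]; simp only [Cardinal.lift_id]; exact Cardinal.add_eq_self hR
  obtain ⟨e⟩ : Nonempty (↥R ⊕ ↥R ≃ ↥R) := Cardinal.eq.mp hsum
  set H : Set M := Set.range (fun a : ↥R => ((e (Sum.inl a) : ↥R) : M)) with hH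
  have hHsub : H ⊆ R := by
    rintro x ⟨a, rfl⟩
    exact (e (Sum.inl a)).2
  have hinj1 : Function.Injective (fun a : ↥R => ((e (Sum.inl a) : ↥R) : M)) := by
    intro a b hab
    have := Subtype.ext hab
    simpa using e.injective this
  have hinj2 : Function.Injective (fun a : ↥R => ((e (Sum.inr a) : ↥R) : M)) := by
    intro a b hab
    have := Subtype.ext hab
    simpa using e.injective this
  have hrange2 : Set.range (fun a : ↥R => ((e (Sum.inr a) : ↥R) : M)) ⊆ R \ H := by
    rintro x ⟨a, rfl⟩
    refine ⟨(e (Sum.inr a)).2, ?_⟩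
    rintro ⟨b, hb⟩
    have : e (Sum.inl b) = e (Sum.inr a) := Subtype.ext hb
    simpa using e.injective this
  refine ⟨H, hHsub, ?_, ?_⟩
  · rw [hH, Cardinal.mk_range_eq _ hinj1]
  · refine le_antisymm (Cardinal.mk_le_mk_of_subset Set.diff_subset) ?_
    calc #(↥R) = #(↥(Set.range (fun a : ↥R => ((e (Sum.inr a) : ↥R) : M)))) :=
        (Cardinal.mk_range_eq _ hinj2).symm
    _ ≤ _ := Cardinal.mk_le_mk_of_subset hrange2

end Half

section Inf
variable {M : Type u} {E : Set M → Set M → Prop}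

lemma infinite_slice (hE : Equivalence E) (hPI : PermInv E) (ab : Set M → M)
    (hab : ∀ X Y : Set M, ab X = ab Y ↔ E X Y) {κ : Cardinal.{u}}
    (hκ2 : 2 < κ) (hκinf : ℵ₀ ≤ κ) (hM : #M = κ)
    (Y Z : Set M) (hY : #(↥Y) = κ) (hYc : #(↥(Yᶜ)) = κ)
    (hZ : #(↥Z) = κ) (hZc : #(↥(Zᶜ)) = κ) : E Y Z := by
  classical
  set A1 : Set M := Y ∩ Z with hA1def
  set A2 : Set M := Y \ Z with hA2def
  set A3 : Set M := Z \ Y with hA3def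
  set A4 : Set M := (Y ∪ Z)ᶜ with hA4def
  -- choice of "half" pieces
  have pick : ∀ A : Set M, ∃ HA, HA ⊆ A ∧ (#(↥A) = κ → (#(↥HA) = κ ∧ #(↥(A \ HA)) = κ)) := by
    intro A
    by_cases h : #(↥A) = κ
    · obtain ⟨HA, h1, h2, h3⟩ := exists_half A (h ▸ hκinf)
      exact ⟨HA, h1, fun _ => ⟨h2.trans h, h3.trans h⟩⟩
    · exact ⟨∅, Set.empty_subset _, fun hc => absurd hc h⟩
  choose Hf hHsub hHcard using pick
  set W : Set M := Hf A1 ∪ Hf A2 ∪ Hf A3 ∪ Hf A4 with hWdef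
  have hx1 : ∀ x, x ∈ W ↔ x ∈ Hf A1 ∨ x ∈ Hf A2 ∨ x ∈ Hf A3 ∨ x ∈ Hf A4 := by
    intro x
    simp [hWdef, or_assoc]
  -- region disjointness at element level
  have n12 : ∀ x, x ∈ A1 → x ∈ A2 → False := fun x h1 h2 => h2.2 h1.2
  have n13 : ∀ x, x ∈ A1 → x ∈ A3 → False := fun x h1 h2 => h2.2 h1.1
  have n14 : ∀ x, x ∈ A1 → x ∈ A4 → False := fun x h1 h2 => h2 (Or.inl h1.1)
  have n23 : ∀ x, x ∈ A2 → x ∈ A3 → False := fun x h1 h2 => h2.2 h1.1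
  have n24 : ∀ x, x ∈ A2 → x ∈ A4 → False := fun x h1 h2 => h2 (Or.inl h1.1)
  have n34 : ∀ x, x ∈ A3 → x ∈ A4 → False := fun x h1 h2 => h2 (Or.inr h1.1)
  -- each region minus its piece avoids W
  have df1 : ∀ x, x ∈ A1 → x ∉ Hf A1 → x ∉ W := by
    intro x hA hH hW
    rcases (hx1 x).mp hW with h | h | h | h
    exacts [hH h, n12 x hA (hHsub A2 h), n13 x hA (hHsub A3 h), n14 x hA (hHsub A4 h)]
  have df2 : ∀ x, x ∈ A2 → x ∉ Hf A2 → x ∉ W := by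
    intro x hA hH hW
    rcases (hx1 x).mp hW with h | h | h | h
    exacts [n12 x (hHsub A1 h) hA, hH h, n23 x hA (hHsub A3 h), n24 x hA (hHsub A4 h)]
  have df3 : ∀ x, x ∈ A3 → x ∉ Hf A3 → x ∉ W := by
    intro x hA hH hW
    rcases (hx1 x).mp hW with h | h | h | h
    exacts [n13 x (hHsub A1 h) hA, n23 x (hHsub A2 h) hA, hH h, n34 x hA (hHsub A4 h)]
  have df4 : ∀ x, x ∈ A4 → x ∉ Hf A4 → x ∉ W := by
    intro x hA hH hW
    rcases (hx1 x).mp hW with h | h | h | h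
    exacts [n14 x (hHsub A1 h) hA, n24 x (hHsub A2 h) hA, n34 x (hHsub A3 h) hA, hH h]
  -- covering facts
  have covY : Y = A1 ∪ A2 := (Set.inter_union_diff Y Z).symm
  have covZ : Z = A1 ∪ A3 := by
    rw [hA1def, hA3def, Set.inter_comm]
    exact (Set.inter_union_diff Z Y).symm
  have covYc : Yᶜ = A3 ∪ A4 := by
    ext x; simp [hA3def, hA4def]; tauto
  have covZc : Zᶜ = A2 ∪ A4 := by
    ext x; simp [hA2def, hA4def]; tauto
  have bigpart : ∀ B C : Set M, (∀ x, x ∈ B → x ∈ C → False) → #(↥(B ∪ C)) = κ →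
      #(↥B) = κ ∨ #(↥C) = κ := by
    intro B C hdisj hBC
    by_contra hcon
    push_neg at hcon
    have hd : Disjoint B C := Set.disjoint_left.mpr (fun {x} hx hy => (hdisj x hx hy).elim)
    have hB : #(↥B) < κ := lt_of_le_of_ne (le_of_le_of_eq (Cardinal.mk_le_mk_of_subset
      Set.subset_union_left) hBC) hcon.1
    have hC : #(↥C) < κ := lt_of_le_of_ne (le_of_le_of_eq (Cardinal.mk_le_mk_of_subset
      Set.subset_union_right) hBC) hcon.2
    have := Cardinal.add_lt_of_lt hκinf hB hC
    rw [← Cardinal.mk_union_of_disjoint hd, hBC] at this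
    exact lt_irrefl _ this
  have card_of_subset : ∀ U A : Set M, U ⊆ A → #(↥U) = κ → #(↥A) = κ := by
    intro U A hsub hU
    refine le_antisymm (le_of_le_of_eq (Cardinal.mk_set_le A) hM) ?_
    exact le_of_eq_of_le hU.symm (Cardinal.mk_le_mk_of_subset hsub)
  -- generic: compute the four cards for T with T = B ∪ C regions
  have main : ∀ (T B C : Set M), T = B ∪ C → (∀ x, x ∈ B → x ∈ C → False) →
      (∀ x, x ∈ B → x ∉ Hf B → x ∉ W) → (∀ x, x ∈ C → x ∉ Hf C → x ∉ W) →
      Hf B ⊆ W → Hf C ⊆ W → #(↥T) = κ →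
      #(↥(T ∩ W)) = κ ∧ #(↥(T \ W)) = κ := by
    intro T B C hcov hdisj dfB dfC hBW hCW hT
    rcases bigpart B C hdisj (hcov ▸ hT) with hbig | hbig
    · obtain ⟨hH, hD⟩ := hHcard B hbig
      constructor
      · exact card_of_subset _ _ (fun x hx => ⟨hcov ▸ Or.inl (hHsub B hx), hBW hx⟩) hH
      · exact card_of_subset (B \ Hf B) _
          (fun x hx => ⟨hcov ▸ Or.inl hx.1, dfB x hx.1 hx.2⟩) hD
    · obtain ⟨hH, hD⟩ := hHcard C hbig
      constructor
      · exact card_of_subset _ _ (fun x hx => ⟨hcov ▸ Or.inr (hHsub C hx), hCW hx⟩) hH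
      · exact card_of_subset (C \ Hf C) _
          (fun x hx => ⟨hcov ▸ Or.inr hx.1, dfC x hx.1 hx.2⟩) hD
  have sW1 : Hf A1 ⊆ W := fun x hx => (hx1 x).mpr (Or.inl hx)
  have sW2 : Hf A2 ⊆ W := fun x hx => (hx1 x).mpr (Or.inr (Or.inl hx))
  have sW3 : Hf A3 ⊆ W := fun x hx => (hx1 x).mpr (Or.inr (Or.inr (Or.inl hx)))
  have sW4 : Hf A4 ⊆ W := fun x hx => (hx1 x).mpr (Or.inr (Or.inr (Or.inr hx)))
  obtain ⟨cY1, cY2⟩ := main Y A1 A2 covY n12 df1 df2 sW1 sW2 hY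
  obtain ⟨cZ1, cZ2⟩ := main Z A1 A3 covZ n13 df1 df3 sW1 sW3 hZ
  obtain ⟨cYc1, cYc2⟩ := main Yᶜ A3 A4 covYc n34 df3 df4 sW3 sW4 hYc
  obtain ⟨cZc1, cZc2⟩ := main Zᶜ A2 A4 covZc n24 df2 df4 sW2 sW4 hZc
  -- translate: Yᶜ ∩ W = W \ Y, Yᶜ \ W = (Y ∪ W)ᶜ
  have tY1 : #(↥(W \ Y)) = κ := by
    rw [show W \ Y = Yᶜ ∩ W by ext x; simp [Set.mem_diff]; tauto]; exact cYc1
  have tY2 : #(↥((Y ∪ W)ᶜ)) = κ := by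
    rw [show (Y ∪ W)ᶜ = Yᶜ \ W by ext x; simp; try tauto]; exact cYc2
  have tZ1 : #(↥(W \ Z)) = κ := by
    rw [show W \ Z = Zᶜ ∩ W by ext x; simp [Set.mem_diff]; tauto]; exact cZc1
  have tZ2 : #(↥((W ∪ Z)ᶜ)) = κ := by
    rw [show (W ∪ Z)ᶜ = Zᶜ \ W by ext x; simp; try tauto]; exact cZc2
  have hYW : E Y W :=
    allk_equiv hE hPI ab hab hκ2 hκinf hM Y W cY1 cY2 tY1 tY2
  have hWZ : E W Z := by
    refine allk_equiv hE hPI ab hab hκ2 hκinf hM W Z ?_ tZ1 cZ2 tZ2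
    rw [Set.inter_comm]; exact cZ1
  exact hE.trans hYW hWZ

end Inf

section FinCase
variable {M : Type u} {E : Set M → Set M → Prop}

/-- Badness of an intersection size for the finite case. -/
def BadT (E : Set M → Set M → Prop) (n t : ℕ) : Prop :=
  ∃ P Q : Set M, P.ncard = n ∧ Q.ncard = n ∧ (P ∩ Q).ncard = t ∧ ¬ E P Q

lemma mk_set_ncard [Finite M] (s : Set M) : #(↥s) = (s.ncard : Cardinal) := by
  have h1 : ((#(↥s)).toNat : Cardinal) = #(↥s) :=
    Cardinal.cast_toNat_of_lt_aleph0 (Cardinal.lt_aleph0_of_finite _)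
  rw [← h1]
  rw [show (#(↥s)).toNat = Nat.card ↥s from rfl, Nat.card_coe_set_eq]

lemma regions_ncard [Finite M] {n : ℕ} (hM : Nat.card M = 2 * n) (A B : Set M)
    (hA : A.ncard = n) (hB : B.ncard = n) :
    (A ∩ B).ncard ≤ n ∧ (A \ B).ncard = n - (A ∩ B).ncard ∧
      (B \ A).ncard = n - (A ∩ B).ncard ∧ ((A ∪ B)ᶜ).ncard = (A ∩ B).ncard := by
  have h1 := Set.ncard_inter_add_ncard_diff_eq_ncard A B (Set.toFinite A)
  have h2 := Set.ncard_inter_add_ncard_diff_eq_ncard B A (Set.toFinite B)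
  have hcomm : (B ∩ A).ncard = (A ∩ B).ncard := by rw [Set.inter_comm]
  have hu : (A ∪ B).ncard + ((A ∪ B)ᶜ).ncard = 2 * n := by
    rw [Set.ncard_add_ncard_compl (A ∪ B) (Set.toFinite _) (Set.toFinite _), hM]
  have hu2 : (A ∪ B).ncard = A.ncard + (B \ A).ncard := by
    rw [← Set.ncard_union_eq Set.disjoint_sdiff_right (Set.toFinite _) (Set.toFinite _),
      Set.union_diff_self]
  omega

lemma typeE_fin [Finite M] (hPI : PermInv E) {n : ℕ} (hM : Nat.card M = 2 * n)
    (P Q P' Q' : Set M) (hP : P.ncard = n) (hQ : Q.ncard = n)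
    (hP' : P'.ncard = n) (hQ' : Q'.ncard = n)
    (ht : (P ∩ Q).ncard = (P' ∩ Q').ncard) : (E P Q ↔ E P' Q') := by
  obtain ⟨r1, r2, r3, r4⟩ := regions_ncard hM P Q hP hQ
  obtain ⟨r1', r2', r3', r4'⟩ := regions_ncard hM P' Q' hP' hQ'
  refine E_const_on_type hPI P Q P' Q' ?_ ?_ ?_ ?_ <;>
    rw [mk_set_ncard, mk_set_ncard] <;> norm_cast <;> omega

lemma spreadA [Finite M] (hE : Equivalence E) {n r w1 w2 w3 w4 : ℕ}
    (hM : Nat.card M = 2 * n) (hr : BadT E n r)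
    (h1 : w1 ≤ r) (h2 : w2 + r ≤ n) (h3 : w3 + r ≤ n) (h4 : w4 ≤ r)
    (hsum : w1 + w2 + w3 + w4 = n) :
    BadT E n (w1 + w2) ∨ BadT E n (w1 + w3) := by
  obtain ⟨Y, Z, hY, hZ, hYZ, hne⟩ := hr
  obtain ⟨q1, q2, q3, q4⟩ := regions_ncard hM Y Z hY hZ
  obtain ⟨C1, hC1s, hC1⟩ := Set.exists_subset_card_eq (s := Y ∩ Z) (n := w1) (by omega)
  obtain ⟨C2, hC2s, hC2⟩ := Set.exists_subset_card_eq (s := Y \ Z) (n := w2) (by omega)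
  obtain ⟨C3, hC3s, hC3⟩ := Set.exists_subset_card_eq (s := Z \ Y) (n := w3) (by omega)
  obtain ⟨C4, hC4s, hC4⟩ := Set.exists_subset_card_eq (s := (Y ∪ Z)ᶜ) (n := w4) (by omega)
  set W : Set M := C1 ∪ C2 ∪ C3 ∪ C4 with hWdef
  have m1 : ∀ x, x ∈ C1 → x ∈ Y ∧ x ∈ Z := fun x hx => hC1s hx
  have m2 : ∀ x, x ∈ C2 → x ∈ Y ∧ x ∉ Z := fun x hx => hC2s hx
  have m3 : ∀ x, x ∈ C3 → x ∈ Z ∧ x ∉ Y := fun x hx => hC3s hx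
  have m4 : ∀ x, x ∈ C4 → x ∉ Y ∧ x ∉ Z := by
    intro x hx
    have := hC4s hx
    simp only [Set.mem_compl_iff, Set.mem_union] at this
    tauto
  have dWY : W ∩ Y = C1 ∪ C2 := by
    ext x
    constructor
    · rintro ⟨hw, hy⟩
      rcases hw with ((h | h) | h) | h
      · exact Or.inl h
      · exact Or.inr h
      · exact absurd hy (m3 x h).2
      · exact absurd hy (m4 x h).1
    · rintro (h | h)
      · exact ⟨Or.inl (Or.inl (Or.inl h)), (m1 x h).1⟩
      · exact ⟨Or.inl (Or.inl (Or.inr h)), (m2 x h).1⟩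
  have dWZ : W ∩ Z = C1 ∪ C3 := by
    ext x
    constructor
    · rintro ⟨hw, hz⟩
      rcases hw with ((h | h) | h) | h
      · exact Or.inl h
      · exact absurd hz (m2 x h).2
      · exact Or.inr h
      · exact absurd hz (m4 x h).2
    · rintro (h | h)
      · exact ⟨Or.inl (Or.inl (Or.inl h)), (m1 x h).2⟩
      · exact ⟨Or.inl (Or.inr h), (m3 x h).1⟩
  have d12 : Disjoint C1 C2 := Set.disjoint_left.mpr fun {x} hx hy => (m2 x hy).2 (m1 x hx).2
  have d13 : Disjoint C1 C3 := Set.disjoint_left.mpr fun {x} hx hy => (m3 x hy).2 (m1 x hx).1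
  have d14 : Disjoint C1 C4 := Set.disjoint_left.mpr fun {x} hx hy => (m4 x hy).1 (m1 x hx).1
  have d23 : Disjoint C2 C3 := Set.disjoint_left.mpr fun {x} hx hy => (m3 x hy).2 (m2 x hx).1
  have d24 : Disjoint C2 C4 := Set.disjoint_left.mpr fun {x} hx hy => (m4 x hy).1 (m2 x hx).1
  have d34 : Disjoint C3 C4 := Set.disjoint_left.mpr fun {x} hx hy => (m4 x hy).2 (m3 x hx).1
  have hc12 : (C1 ∪ C2).ncard = w1 + w2 := by
    rw [Set.ncard_union_eq d12 (Set.toFinite _) (Set.toFinite _), hC1, hC2]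
  have hc13 : (C1 ∪ C3).ncard = w1 + w3 := by
    rw [Set.ncard_union_eq d13 (Set.toFinite _) (Set.toFinite _), hC1, hC3]
  have hW : W.ncard = n := by
    rw [hWdef]
    rw [Set.ncard_union_eq (by
        refine Set.disjoint_union_left.mpr ⟨Set.disjoint_union_left.mpr ⟨d14, d24⟩, d34⟩)
      (Set.toFinite _) (Set.toFinite _)]
    rw [Set.ncard_union_eq (Set.disjoint_union_left.mpr ⟨d13, d23⟩)
      (Set.toFinite _) (Set.toFinite _), hc12, hC3, hC4]
    omega
  by_cases hYW : E Y W
  · by_cases hWZ : E W Z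
    · exact absurd (hE.trans hYW hWZ) hne
    · right
      refine ⟨W, Z, hW, hZ, ?_, hWZ⟩
      rw [dWZ, hc13]
  · left
    refine ⟨Y, W, hY, hW, ?_, hYW⟩
    rw [Set.inter_comm, dWY, hc12]

end FinCase

section FinCase2
variable {M : Type u} {E : Set M → Set M → Prop}

lemma climb [Finite M] (hE : Equivalence E) {n : ℕ} (hM : Nat.card M = 2 * n)
    (hn : 3 ≤ n) :
    ∀ k r, n - 1 - r ≤ k → 1 ≤ r → r ≤ n - 1 → BadT E n r → BadT E n (n - 1) := by
  intro k
  induction k with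
  | zero =>
    intro r hk h1 h2 hb
    have : r = n - 1 := by omega
    exact this ▸ hb
  | succ k ih =>
    intro r hk h1 h2 hb
    by_cases hr : r = n - 1
    · exact hr ▸ hb
    · set t := (n + r) / 2 with htdef
      have hbt : BadT E n t := by
        have := spreadA hE hM hb (w1 := 2 * t - n) (w2 := n - t) (w3 := n - t) (w4 := 0)
          (by omega) (by omega) (by omega) (by omega) (by omega)
        rcases this with h | h
        · have : 2 * t - n + (n - t) = t := by omega
          exact this ▸ h
        · have : 2 * t - n + (n - t) = t := by omega
          exact this ▸ h
      exact ih t (by omega) (by omega) (by omega) hbt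

lemma all_bad [Finite M] (hE : Equivalence E) {n : ℕ} (hM : Nat.card M = 2 * n)
    (hn : 3 ≤ n) (hb : ∃ r, r ≤ n - 1 ∧ BadT E n r) :
    ∀ t, 1 ≤ t → t ≤ n - 1 → BadT E n t := by
  obtain ⟨r, hr, hbr⟩ := hb
  have htop : BadT E n (n - 1) := by
    rcases Nat.eq_zero_or_pos r with h0 | hpos
    · subst h0
      have := spreadA hE hM hbr (w1 := 0) (w2 := 1) (w3 := n - 1) (w4 := 0)
        (by omega) (by omega) (by omega) (by omega) (by omega)
      rcases this with h | h
      · exact climb hE hM hn (n - 1) 1 (by omega) (by omega) (by omega) (by simpa using h)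
      · simpa using h
    · exact climb hE hM hn (n - 1) r (by omega) hpos hr hbr
  intro t h1 h2
  have := spreadA hE hM htop (w1 := t - 1) (w2 := 1) (w3 := 1) (w4 := n - t - 1)
    (by omega) (by omega) (by omega) (by omega) (by omega)
  rcases this with h | h
  · have he : t - 1 + 1 = t := by omega
    exact he ▸ h
  · have he : t - 1 + 1 = t := by omega
    exact he ▸ h

lemma choose_bound : ∀ n, 3 ≤ n → 4 * n < (2 * n).choose n := by
  have hdef : ∀ m, Nat.centralBinom m = (2 * m).choose m := fun m => rfl
  intro n hn
  induction n, hn using Nat.le_induction with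
  | base => decide
  | succ n hn ih =>
    rw [← hdef]
    have h := Nat.succ_mul_centralBinom_succ n
    rw [hdef n] at h
    have key : (n + 1) * (4 * (n + 1)) < (n + 1) * Nat.centralBinom (n + 1) := by
      rw [h]
      calc (n + 1) * (4 * (n + 1)) ≤ 2 * (2 * n + 1) * (4 * n) := by nlinarith
      _ < 2 * (2 * n + 1) * ((2 * n).choose n) := by nlinarith [ih]
    exact Nat.lt_of_mul_lt_mul_left key

lemma fin_contra [Finite M] (hE : Equivalence E) (hPI : PermInv E) (ab : Set M → M)
    (hab : ∀ X Y : Set M, ab X = ab Y ↔ E X Y) {n : ℕ}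
    (hM : Nat.card M = 2 * n) (hn : 3 ≤ n)
    (Y Z : Set M) (hY : Y.ncard = n) (hZ : Z.ncard = n) (hne : ¬ E Y Z) : False := by
  classical
  have hr0 : ∃ r, r ≤ n - 1 ∧ BadT E n r := by
    refine ⟨(Y ∩ Z).ncard, ?_, Y, Z, hY, hZ, rfl, hne⟩
    obtain ⟨q1, _, _, _⟩ := regions_ncard hM Y Z hY hZ
    rcases Nat.lt_or_ge (Y ∩ Z).ncard n with h | h
    · omega
    · exfalso
      have h1 : Y ∩ Z = Y :=
        Set.eq_of_subset_of_ncard_le Set.inter_subset_left (by omega) (Set.toFinite _)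
      have h2 : Y ∩ Z = Z :=
        Set.eq_of_subset_of_ncard_le Set.inter_subset_right (by omega) (Set.toFinite _)
      have hYZ' : Y = Z := by rw [← h1, h2]
      exact hne (hYZ' ▸ hE.refl Y)
  have hall := all_bad hE hM hn hr0
  have hclass : ∀ W W' : Set M, W.ncard = n → W'.ncard = n → E W W' →
      W' = W ∨ W' = Wᶜ := by
    intro W W' hW hW' hEW
    obtain ⟨q1, _, _, _⟩ := regions_ncard hM W W' hW hW'
    rcases Nat.eq_zero_or_pos (W ∩ W').ncard with h0 | hpos
    · right
      have hdisj : W ∩ W' = ∅ := (Set.ncard_eq_zero (Set.toFinite _)).mp h0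
      have hsub : W' ⊆ Wᶜ := by
        intro x hx hxW
        have : x ∈ W ∩ W' := ⟨hxW, hx⟩
        rw [hdisj] at this
        exact this
      have hWc : (Wᶜ).ncard = n := by
        have := Set.ncard_add_ncard_compl W (Set.toFinite _) (Set.toFinite _)
        omega
      exact Set.eq_of_subset_of_ncard_le hsub (by omega) (Set.toFinite _)
    · rcases Nat.lt_or_ge (W ∩ W').ncard n with hlt | hge
      · exfalso
        obtain ⟨P, Q, hP, hQ, hPQ, hnePQ⟩ := hall (W ∩ W').ncard hpos (by omega)
        exact hnePQ ((typeE_fin hPI hM P Q W W' hP hQ hW hW' (by rw [hPQ])).mpr hEW)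
      · left
        have h1 : W ∩ W' = W :=
          Set.eq_of_subset_of_ncard_le Set.inter_subset_left (by omega) (Set.toFinite _)
        have h2 : W ∩ W' = W' :=
          Set.eq_of_subset_of_ncard_le Set.inter_subset_right (by omega) (Set.toFinite _)
        rw [← h1, h2]
  haveI : Fintype M := Fintype.ofFinite M
  obtain ⟨m₀⟩ : Nonempty M := by
    have h : 0 < Nat.card M := by omega
    exact (Nat.card_pos_iff.mp h).1
  set F : {s : Finset M // s.card = n} → M × Bool :=
    fun s => (ab ((s : Finset M) : Set M), decide (m₀ ∈ (s : Finset M))) with hF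
  have hFinj : Function.Injective F := by
    intro s s' hss
    have h1 : ab ((s : Finset M) : Set M) = ab ((s' : Finset M) : Set M) :=
      congrArg Prod.fst hss
    have h2 : decide (m₀ ∈ (s : Finset M)) = decide (m₀ ∈ (s' : Finset M)) :=
      congrArg Prod.snd hss
    have hmem : (m₀ ∈ (s : Finset M)) ↔ (m₀ ∈ (s' : Finset M)) := by
      simpa [decide_eq_decide] using h2
    have hE' : E ((s : Finset M) : Set M) ((s' : Finset M) : Set M) := (hab _ _).mp h1
    have hcs : ((s : Finset M) : Set M).ncard = n := by
      rw [Set.ncard_coe_finset]; exact s.2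
    have hcs' : ((s' : Finset M) : Set M).ncard = n := by
      rw [Set.ncard_coe_finset]; exact s'.2
    rcases hclass _ _ hcs hcs' hE' with h | h
    · exact Subtype.ext (Finset.coe_injective h).symm
    · exfalso
      have hm' : m₀ ∈ ((s' : Finset M) : Set M) ↔ m₀ ∉ ((s : Finset M) : Set M) := by
        rw [h]; simp
      simp only [Finset.mem_coe] at hm'
      tauto
  have hcard1 : Fintype.card {s : Finset M // s.card = n} = (2 * n).choose n := by
    rw [Fintype.card_finset_len]
    congr 1
    rw [← Nat.card_eq_fintype_card, hM]
  have hle := Fintype.card_le_of_injective F hFinj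
  rw [hcard1] at hle
  have hcard2 : Fintype.card (M × Bool) = 4 * n := by
    rw [Fintype.card_prod, Fintype.card_bool, ← Nat.card_eq_fintype_card, hM]
    ring
  rw [hcard2] at hle
  exact absurd hle (not_le.mpr (choose_bound n hn))

end FinCase2

/-- Bad-company theorem: an abstraction operator for `E` precludes a nontrivial
bicardinal slice at a concept with `2 < |X| = |Xᶜ|`. -/
theorem bad_company {M : Type*} (E : Set M → Set M → Prop)
    (hE : Equivalence E) (hPI : PermInv E) (ab : Set M → M)
    (hab : ∀ X Y : Set M, ab X = ab Y ↔ E X Y) :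
    ¬ ∃ X : Set M, 2 < Cardinal.mk X ∧ Cardinal.mk X = Cardinal.mk (Xᶜ : Set M) ∧
      ¬ TrivialSlice E X := by
  rintro ⟨X, hX2, hXc, hnt⟩
  obtain ⟨Y, Z, hBY, hBZ, hne⟩ : ∃ Y Z : Set M, Bicard Y X ∧ Bicard Z X ∧ ¬ E Y Z := by
    unfold TrivialSlice at hnt
    push_neg at hnt
    obtain ⟨Y, Z, h1, h2, h3⟩ := hnt
    exact ⟨Y, Z, h1, h2, h3⟩
  set κ := #(↥X) with hκdef
  have hMcard : #M = κ + κ := by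
    have h := Cardinal.mk_sum_compl X
    rw [← hXc] at h
    exact h.symm
  rcases lt_or_ge κ ℵ₀ with hfin | hinf
  · -- finite case
    obtain ⟨n, hn⟩ := Cardinal.lt_aleph0.mp hfin
    have hn3 : 3 ≤ n := by
      have h2n : (2 : Cardinal) < (n : Cardinal) := hn ▸ hX2
      have : (2 : ℕ) < n := by exact_mod_cast h2n
      omega
    have hMe : #M = ((2 * n : ℕ) : Cardinal) := by
      rw [hMcard, hn]; push_cast; ring
    have hMfin : #M < ℵ₀ := by rw [hMe]; exact Cardinal.nat_lt_aleph0 _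
    haveI : Finite M := Cardinal.lt_aleph0_iff_finite.mp hMfin
    have hM2n : Nat.card M = 2 * n := by
      have h := congrArg Cardinal.toNat hMe
      rwa [Cardinal.toNat_natCast] at h
    have hYn : Y.ncard = n := by
      have h1 : #(↥Y) = (n : Cardinal) := hBY.1.trans hn
      rw [mk_set_ncard Y] at h1
      exact_mod_cast h1
    have hZn : Z.ncard = n := by
      have h1 : #(↥Z) = (n : Cardinal) := hBZ.1.trans hn
      rw [mk_set_ncard Z] at h1
      exact_mod_cast h1
    exact fin_contra hE hPI ab hab hM2n hn3 Y Z hYn hZn hne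
  · -- infinite case
    have hMk : #M = κ := by rw [hMcard, Cardinal.add_eq_self hinf]
    apply hne
    refine infinite_slice hE hPI ab hab hX2 hinf hMk Y Z hBY.1 ?_ hBZ.1 ?_
    · rw [hBY.2, ← hXc]
    · rw [hBZ.2, ← hXc]
end

section
/- Let E be a permutation-invariant equivalence relation on Set M and X : Set M with |X| = |Xᶜ| such that the bicardinal slice E(⊟)_X is separative (refines a separation). Then there is no abstraction operator ∂ : Set M → M for E. -/
/-- A separative slice at a concept with `|X| = |Xᶜ|` precludes any abstraction
operator for `E`. -/
theorem separative_no_abstraction {M : Type*} (E : Set M → Set M → Prop)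
    (hE : Equivalence E) (hPI : PermInv E) (X : Set M)
    (hX : Cardinal.mk X = Cardinal.mk (Xᶜ : Set M)) (hSep : Separative E X) :
    ¬ ∃ ab : Set M → M, ∀ Y Z : Set M, ab Y = ab Z ↔ E Y Z := by
  classical
  rintro ⟨ab, hab⟩
  rcases isEmpty_or_nonempty M with hempty | hne
  · exact hempty.elim (ab ∅)
  -- X is nonempty
  have hXne : X.Nonempty := by
    by_contra h
    rw [Set.not_nonempty_iff_eq_empty] at h
    subst h
    have h0 : Cardinal.mk ((∅ : Set M)ᶜ : Set M) = 0 := by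
      rw [← hX]; simp
    rw [Cardinal.mk_eq_zero_iff] at h0
    rw [Set.compl_empty] at h0
    exact h0.false ⟨hne.some, trivial⟩
  rcases lt_or_ge (Cardinal.mk X) Cardinal.aleph0 with hfin | hinf
  · -- FINITE CASE
    have hXf : X.Finite := Cardinal.lt_aleph0_iff_set_finite.mp hfin
    have hXcf : Xᶜ.Finite := Cardinal.lt_aleph0_iff_set_finite.mp (hX ▸ hfin)
    have hMfin : Finite M := by
      have h1 : (X ∪ Xᶜ).Finite := hXf.union hXcf
      rw [Set.union_compl_self] at h1
      exact Set.finite_univ_iff.mp h1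
    haveI : Fintype M := Fintype.ofFinite M
    set k := hXf.toFinset.card with hkdef
    have hk : Cardinal.mk X = (k : Cardinal) := by
      conv_lhs => rw [← hXf.coe_toFinset]
      exact Cardinal.mk_coe_finset
    have hk1 : 1 ≤ k := by
      rw [Nat.one_le_iff_ne_zero, hkdef, Ne, Finset.card_eq_zero, ← Finset.not_nonempty_iff_eq_empty,
        not_not, Set.Finite.toFinset_nonempty]
      exact hXne
    have hMcard : Cardinal.mk M = ((2 * k : ℕ) : Cardinal) := by
      rw [← Cardinal.mk_sum_compl X, hk, ← hX, hk]
      push_cast; ring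
    -- symmetric differences of equivalent slice members are empty
    have lemA : ∀ Y Z : Set M, Bicard Y X → Bicard Z X → E Y Z → Y = Z := by
      intro Y Z hY hZ hYZ
      by_contra hne'
      have hD : (symmDiff Y Z).Nonempty := Set.symmDiff_nonempty.mpr hne'
      have h1 : (1 : Cardinal) ≤ Cardinal.mk (symmDiff Y Z : Set M) := by
        rw [Cardinal.one_le_iff_ne_zero, Ne, Cardinal.mk_eq_zero_iff]
        rw [not_isEmpty_iff]
        exact hD.to_subtype
      obtain ⟨-, h2⟩ := hSep Y Z hY hZ hYZ
      refine h2 ⟨k, ?_⟩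
      rw [hk]
      calc (k : Cardinal) = (k : Cardinal) * 1 := (mul_one _).symm
        _ ≤ (k : Cardinal) * Cardinal.mk (symmDiff Y Z : Set M) := by
            exact mul_le_mul_right h1 _
    -- the empty set is not equivalent to slice members
    have lemB : ∀ Y : Set M, Bicard Y X → ¬ E ∅ Y := by
      intro Y hY hEY
      have hYne : Y.Nonempty := by
        rw [← Set.nonempty_coe_sort, ← not_isEmpty_iff, ← Cardinal.mk_eq_zero_iff]
        rw [hY.1, hk]
        exact_mod_cast by omega
      have hYcne : Yᶜ.Nonempty := by
        rw [← Set.nonempty_coe_sort, ← not_isEmpty_iff, ← Cardinal.mk_eq_zero_iff]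
        rw [hY.2, ← hX, hk]
        exact_mod_cast by omega
      obtain ⟨y, hy⟩ := hYne
      obtain ⟨z, hz⟩ := hYcne
      set π := Equiv.swap y z with hπ
      have h2 : E ∅ (π '' Y) := by
        have := (hPI π ∅ Y).mp hEY
        simpa using this
      have h3 : E Y (π '' Y) := hE.trans (hE.symm hEY) h2
      have hbic : Bicard (π '' Y) X := by
        constructor
        · rw [Cardinal.mk_image_eq π.injective]; exact hY.1
        · rw [← Equiv.image_compl, Cardinal.mk_image_eq π.injective]; exact hY.2
      have heq := lemA Y (π '' Y) hY hbic h3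
      have hzY : z ∈ π '' Y := ⟨y, hy, Equiv.swap_apply_left y z⟩
      rw [← heq] at hzY
      exact hz hzY
    -- every k-element finset is bicardinal to X
    have hbics : ∀ s : Finset M, s.card = k → Bicard (↑s) X := by
      intro s hs
      have hcoe : Cardinal.mk (↑s : Set M) = (k : Cardinal) := by
        simp [Cardinal.mk_coe_finset, hs]
      refine ⟨by rw [hcoe, hk], ?_⟩
      have hsum : Cardinal.mk (↑s : Set M) + Cardinal.mk ((↑s : Set M)ᶜ : Set M) = Cardinal.mk M :=
        Cardinal.mk_sum_compl _
      have hlt : Cardinal.mk ((↑s : Set M)ᶜ : Set M) < Cardinal.aleph0 :=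
        lt_of_le_of_lt (Cardinal.mk_set_le _) (by rw [hMcard]; exact Cardinal.nat_lt_aleph0 _)
      obtain ⟨m, hm⟩ := Cardinal.lt_aleph0.mp hlt
      rw [hcoe, hm, hMcard] at hsum
      rw [hm, ← hX, hk]
      have : k + m = 2 * k := by exact_mod_cast hsum
      have : m = k := by omega
      rw [this]
    -- the injection into M
    set F : Finset M → M := fun s => ab (↑s : Set M) with hF
    set T : Finset (Finset M) := (Finset.univ.powersetCard k) ∪ {∅} with hT
    have hinj : Set.InjOn F ↑T := by
      intro s hs t ht h
      have hE' : E (↑s : Set M) (↑t : Set M) := (hab _ _).mp h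
      have hs' : s.card = k ∨ s = ∅ := by
        rcases Finset.mem_union.mp hs with h' | h'
        · exact Or.inl (Finset.mem_powersetCard_univ.mp h')
        · exact Or.inr (Finset.mem_singleton.mp h')
      have ht' : t.card = k ∨ t = ∅ := by
        rcases Finset.mem_union.mp ht with h' | h'
        · exact Or.inl (Finset.mem_powersetCard_univ.mp h')
        · exact Or.inr (Finset.mem_singleton.mp h')
      rcases hs' with hs' | hs' <;> rcases ht' with ht' | ht'
      · exact Finset.coe_injective (lemA _ _ (hbics s hs') (hbics t ht') hE')
      · subst ht'
        exfalso
        refine lemB (↑s) (hbics s hs') (hE.symm ?_)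
        simpa using hE'
      · subst hs'
        exfalso
        refine lemB (↑t) (hbics t ht') ?_
        simpa using hE'
      · rw [hs', ht']
    have hcard : T.card ≤ Fintype.card M := by
      have := Finset.card_le_card_of_injOn F (fun s _ => Finset.mem_univ (F s)) hinj
      simpa using this
    have hMc : Fintype.card M = 2 * k := by
      have := Cardinal.mk_fintype M
      rw [hMcard] at this
      exact_mod_cast this.symm
    have hTcard : T.card = (2 * k).choose k + 1 := by
      rw [hT, Finset.card_union_of_disjoint, Finset.card_powersetCard, Finset.card_univ,
        Finset.card_singleton, hMc]
      · rw [Finset.disjoint_singleton_right]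
        intro hmem
        have := Finset.mem_powersetCard_univ.mp hmem
        simp at this
        omega
    have hchoose : 2 * k ≤ (2 * k).choose k := by
      have h1 := Nat.choose_le_middle 1 (2 * k)
      rw [Nat.choose_one_right] at h1
      have : 2 * k / 2 = k := by omega
      rwa [this] at h1
    rw [hTcard, hMc] at hcard
    omega
  · -- INFINITE CASE
    set κ := Cardinal.mk X with hκ
    have hM : Cardinal.mk M = κ := by
      rw [← Cardinal.mk_sum_compl X, ← hX, ← hκ, Cardinal.add_eq_self hinf]
    have hmkS : Cardinal.mk ((↥X × ↥X) ⊕ (↥X ⊕ ↥X)) = Cardinal.mk M := by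
      simp only [Cardinal.mk_sum, Cardinal.mk_prod, Cardinal.lift_id, hM, ← hκ]
      rw [Cardinal.mul_eq_self hinf, Cardinal.add_eq_self hinf, Cardinal.add_eq_self hinf]
    obtain ⟨e⟩ := Cardinal.eq.mp hmkS
    set P : Set ↥X → ((↥X × ↥X) ⊕ (↥X ⊕ ↥X)) → Prop :=
      fun A x => Sum.elim (fun p => p.1 ∈ A) (Sum.elim (fun _ => True) (fun _ => False)) x
      with hP
    set Y : Set ↥X → Set M := fun A => {m | P A (e.symm m)} with hY
    have m1 : ∀ (A : Set ↥X) (a b : ↥X), e (Sum.inl (a, b)) ∈ Y A ↔ a ∈ A := by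
      intro A a b; simp [hY, hP]
    have m2 : ∀ (A : Set ↥X) (a : ↥X), e (Sum.inr (Sum.inl a)) ∈ Y A := by
      intro A a; simp [hY, hP]
    have m3 : ∀ (A : Set ↥X) (a : ↥X), e (Sum.inr (Sum.inr a)) ∉ Y A := by
      intro A a; simp [hY, hP]
    have hYge : ∀ A : Set ↥X, κ ≤ Cardinal.mk (Y A : Set M) := by
      intro A
      refine Cardinal.mk_le_of_injective
        (f := fun a : ↥X => (⟨e (Sum.inr (Sum.inl a)), m2 A a⟩ : ↥(Y A))) ?_
      intro a b h
      have h2 : e (Sum.inr (Sum.inl a)) = e (Sum.inr (Sum.inl b)) := congrArg Subtype.val h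
      simpa using e.injective h2
    have hYcge : ∀ A : Set ↥X, κ ≤ Cardinal.mk ((Y A)ᶜ : Set M) := by
      intro A
      refine Cardinal.mk_le_of_injective
        (f := fun a : ↥X => (⟨e (Sum.inr (Sum.inr a)), m3 A a⟩ : ↥((Y A)ᶜ))) ?_
      intro a b h
      have h2 : e (Sum.inr (Sum.inr a)) = e (Sum.inr (Sum.inr b)) := congrArg Subtype.val h
      simpa using e.injective h2
    have hbic : ∀ A : Set ↥X, Bicard (Y A) X := by
      intro A
      constructor
      · exact le_antisymm ((Cardinal.mk_set_le _).trans_eq hM) (hYge A)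
      · rw [← hX]
        exact le_antisymm ((Cardinal.mk_set_le _).trans_eq hM) (hYcge A)
    have hsd : ∀ A B : Set ↥X, A ≠ B → κ ≤ Cardinal.mk (symmDiff (Y A) (Y B) : Set M) := by
      intro A B hAB
      obtain ⟨a, ha⟩ := Set.symmDiff_nonempty.mpr hAB
      have hmem : ∀ b : ↥X, e (Sum.inl (a, b)) ∈ symmDiff (Y A) (Y B) := by
        intro b
        rw [Set.mem_symmDiff]
        rcases Set.mem_symmDiff.mp ha with ⟨h1, h2⟩ | ⟨h1, h2⟩
        · exact Or.inl ⟨(m1 A a b).mpr h1, fun hc => h2 ((m1 B a b).mp hc)⟩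
        · exact Or.inr ⟨(m1 B a b).mpr h1, fun hc => h2 ((m1 A a b).mp hc)⟩
      refine Cardinal.mk_le_of_injective
        (f := fun b : ↥X => (⟨e (Sum.inl (a, b)), hmem b⟩ : ↥(symmDiff (Y A) (Y B)))) ?_
      intro b c h
      have := e.injective (congrArg Subtype.val h)
      simpa using this
    have hFinj : Function.Injective (fun A : Set ↥X => ab (Y A)) := by
      intro A B h
      by_contra hAB
      have hE' : E (Y A) (Y B) := (hab _ _).mp h
      obtain ⟨-, h2⟩ := hSep (Y A) (Y B) (hbic A) (hbic B) hE'
      refine h2 ⟨1, ?_⟩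
      rw [Nat.cast_one, one_mul]
      exact hsd A B hAB
    have hle : Cardinal.mk (Set ↥X) ≤ Cardinal.mk M := Cardinal.mk_le_of_injective hFinj
    rw [Cardinal.mk_set, hM] at hle
    exact absurd hle (not_le.mpr (Cardinal.cantor κ))
end

section
/- Let E be a permutation-invariant equivalence relation on Set M and X : Set M with |X| = |Xᶜ| such that the bicardinal slice E(⊟)_X is complementative (refines a complementation). If there exists an abstraction operator ∂ : Set M → M for E, then Cardinal.mk M ≤ 4. -/
namespace AuxComp

open scoped Classical

noncomputable def fil {M : Type*} (S : Set M) (F : Finset M) : Finset M := F.filter (· ∈ S)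

variable {M : Type*}

lemma mem_fil {S : Set M} {F : Finset M} {x : M} : x ∈ fil S F ↔ x ∈ F ∧ x ∈ S := by
  classical
  simp [fil]

def Wset (S : Set M) : Set (Finset M × Finset (Finset M)) :=
  {p | ∃ G ∈ p.2, ∀ x : M, x ∈ G ↔ x ∈ p.1 ∧ x ∈ S}

lemma mk_le_W {R : Set (Finset M × Finset (Finset M))} (a : M)
    (G : M → Finset (Finset M)) (h : ∀ x : M, (({a, x} : Finset M), G x) ∈ R) :
    Cardinal.mk M ≤ Cardinal.mk R := by
  refine Cardinal.mk_le_of_injective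
    (f := fun x => (⟨(({a, x} : Finset M), G x), h x⟩ : R)) ?_
  intro x y hxy
  have h1 : ({a, x} : Finset M) = {a, y} := by
    have := congrArg (fun p : R => p.1.1) hxy
    simpa using this
  have hx : x = a ∨ x = y := by
    have : x ∈ ({a, y} : Finset M) := h1 ▸ (by simp : x ∈ ({a, x} : Finset M))
    simpa using this
  have hy : y = a ∨ y = x := by
    have : y ∈ ({a, x} : Finset M) := h1.symm ▸ (by simp : y ∈ ({a, y} : Finset M))
    simpa using this
  rcases hx with hx | hx
  · rcases hy with hy | hy
    · rw [hx, hy]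
    · exact hy.symm
  · exact hx

lemma mem_W_fil (S : Set M) (F : Finset M) (G : Finset (Finset M)) (h : fil S F ∈ G) :
    (F, G) ∈ Wset S :=
  ⟨fil S F, h, fun _ => mem_fil⟩

lemma notMem_W {S T : Set M} {F : Finset M} {G : Finset (Finset M)} {a : M}
    (haF : a ∈ F) (haS : a ∈ S) (haT : a ∉ T)
    (hG : ∀ B ∈ G, B = fil S F) : (F, G) ∉ Wset T := by
  rintro ⟨B, hB, hmem⟩
  have hBe := hG B hB
  have haB : a ∈ B := hBe ▸ mem_fil.mpr ⟨haF, haS⟩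
  exact haT ((hmem a).mp haB).2

lemma notMem_W_empty (S : Set M) (F : Finset M) :
    (F, (∅ : Finset (Finset M))) ∉ Wset S := by
  rintro ⟨B, hB, -⟩
  exact Finset.notMem_empty B hB

lemma mk_le_W_diff {S T : Set M} {a : M} (haS : a ∈ S) (haT : a ∉ T) :
    Cardinal.mk M ≤ Cardinal.mk ↥(Wset S \ Wset T) := by
  apply mk_le_W a (fun x => {fil S {a, x}})
  intro x
  exact ⟨mem_W_fil _ _ _ (Finset.mem_singleton_self _),
    notMem_W (Finset.mem_insert_self a {x}) haS haT
      (fun B hB => Finset.mem_singleton.mp hB)⟩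

lemma mk_le_W_unionc (S T : Set M) (a : M) :
    Cardinal.mk M ≤ Cardinal.mk ↥((Wset S ∪ Wset T)ᶜ) := by
  apply mk_le_W a (fun _ => (∅ : Finset (Finset M)))
  intro x
  rintro (h | h) <;> exact notMem_W_empty _ _ h

lemma mk_le_W_self (S : Set M) (a : M) :
    Cardinal.mk M ≤ Cardinal.mk ↥(Wset S) :=
  mk_le_W a (fun x => {fil S {a, x}})
    (fun _ => mem_W_fil _ _ _ (Finset.mem_singleton_self _))

lemma mk_le_W_selfc (S : Set M) (a : M) :
    Cardinal.mk M ≤ Cardinal.mk ↥((Wset S)ᶜ) :=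
  mk_le_W a (fun _ => ∅) (fun _ => notMem_W_empty _ _)

end AuxComp

/-- A complementative slice at a concept with `|X| = |Xᶜ|` together with an
abstraction operator for `E` forces `|M| ≤ 4`. -/
theorem complementative_small_universe {M : Type*} (E : Set M → Set M → Prop)
    (hE : Equivalence E) (hPI : PermInv E) (X : Set M)
    (hX : Cardinal.mk X = Cardinal.mk (Xᶜ : Set M)) (hComp : Complementative E X)
    (hab : ∃ ab : Set M → M, ∀ Y Z : Set M, ab Y = ab Z ↔ E Y Z) :
    Cardinal.mk M ≤ 4 := by
  obtain ⟨ab, hab⟩ := hab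
  cases finite_or_infinite M with
  | inr hinf =>
    exfalso
    -- |X| = |M|
    have hXM : Cardinal.mk ↥X = Cardinal.mk M := by
      have hsum := Cardinal.mk_sum_compl X
      rw [← hX] at hsum
      have hXinf : Cardinal.aleph0 ≤ Cardinal.mk ↥X := by
        by_contra hlt
        push_neg at hlt
        have hMlt : Cardinal.mk M < Cardinal.aleph0 := by
          rw [← hsum]; exact Cardinal.add_lt_aleph0 hlt hlt
        exact (Cardinal.infinite_iff.mp hinf).not_gt hMlt
      rw [← hsum, Cardinal.add_eq_self hXinf]
    have hI : Cardinal.mk (Finset M × Finset (Finset M)) = Cardinal.mk M := by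
      have h1 : Cardinal.mk (Finset M) = Cardinal.mk M := Cardinal.mk_finset_of_infinite M
      have h2 : Cardinal.mk (Finset (Finset M)) = Cardinal.mk (Finset M) :=
        Cardinal.mk_finset_of_infinite _
      rw [Cardinal.mk_prod, Cardinal.lift_id, Cardinal.lift_id, h1, h2, h1,
        Cardinal.mul_eq_self (Cardinal.infinite_iff.mp hinf)]
    obtain ⟨e⟩ := Cardinal.eq.mp hI
    obtain ⟨a0⟩ : Nonempty M := inferInstance
    set Y : Set M → Set M := fun S => e '' (AuxComp.Wset S) with hYdef
    have hmkW : ∀ S : Set M, Cardinal.mk ↥(AuxComp.Wset S) = Cardinal.mk M := fun S =>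
      le_antisymm ((Cardinal.mk_set_le _).trans_eq hI) (AuxComp.mk_le_W_self S a0)
    have hmkWc : ∀ S : Set M, Cardinal.mk ↥(AuxComp.Wset S)ᶜ = Cardinal.mk M := fun S =>
      le_antisymm ((Cardinal.mk_set_le _).trans_eq hI) (AuxComp.mk_le_W_selfc S a0)
    have hbic : ∀ S : Set M, Bicard (Y S) X := by
      intro S
      constructor
      · rw [hYdef]
        rw [Cardinal.mk_image_eq e.injective, hmkW S, hXM]
      · rw [hYdef]
        show Cardinal.mk ↥(e '' AuxComp.Wset S)ᶜ = _
        rw [← Set.image_compl_eq e.bijective, Cardinal.mk_image_eq e.injective, hmkWc S,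
          ← hX, hXM]
    have hinj : Function.Injective (fun S : Set M => ab (Y S)) := by
      intro S T hST
      by_contra hne
      have hE : E (Y S) (Y T) := (hab _ _).mp hST
      obtain ⟨a, ha⟩ : (symmDiff S T).Nonempty := by
        rcases Set.eq_empty_or_nonempty (symmDiff S T) with h0 | h0
        · rw [← Set.bot_eq_empty] at h0
          exact absurd (symmDiff_eq_bot.mp h0) hne
        · exact h0
      rw [Set.mem_symmDiff] at ha
      have hsub1 : Cardinal.mk M ≤ Cardinal.mk ↥(symmDiff (Y S) (Y T)) := by
        have key : ∀ U V : Set (Finset M × Finset (Finset M)),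
            e '' (U \ V) ⊆ symmDiff (e '' U) (e '' V) := by
          intro U V p hp
          rw [Set.image_diff e.injective] at hp
          exact Set.mem_symmDiff.mpr (Or.inl ⟨hp.1, hp.2⟩)
        rcases ha with ⟨haS, haT⟩ | ⟨haT, haS⟩
        · calc Cardinal.mk M ≤ Cardinal.mk ↥(AuxComp.Wset S \ AuxComp.Wset T) :=
                AuxComp.mk_le_W_diff haS haT
            _ = Cardinal.mk ↥(e '' (AuxComp.Wset S \ AuxComp.Wset T)) :=
                (Cardinal.mk_image_eq e.injective).symm
            _ ≤ Cardinal.mk ↥(symmDiff (Y S) (Y T)) :=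
                Cardinal.mk_le_mk_of_subset (key _ _)
        · calc Cardinal.mk M ≤ Cardinal.mk ↥(AuxComp.Wset T \ AuxComp.Wset S) :=
                AuxComp.mk_le_W_diff haT haS
            _ = Cardinal.mk ↥(e '' (AuxComp.Wset T \ AuxComp.Wset S)) :=
                (Cardinal.mk_image_eq e.injective).symm
            _ ≤ Cardinal.mk ↥(symmDiff (Y S) (Y T)) := by
                apply Cardinal.mk_le_mk_of_subset
                rw [symmDiff_comm]
                exact key _ _
      have hsub2 : Cardinal.mk M ≤ Cardinal.mk ↥((symmDiff (Y S) (Y T))ᶜ) := by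
        calc Cardinal.mk M ≤ Cardinal.mk ↥((AuxComp.Wset S ∪ AuxComp.Wset T)ᶜ) :=
              AuxComp.mk_le_W_unionc S T a0
          _ = Cardinal.mk ↥(e '' (AuxComp.Wset S ∪ AuxComp.Wset T)ᶜ) :=
              (Cardinal.mk_image_eq e.injective).symm
          _ ≤ Cardinal.mk ↥((symmDiff (Y S) (Y T))ᶜ) := by
              apply Cardinal.mk_le_mk_of_subset
              intro p hp
              rw [Set.image_compl_eq e.bijective, Set.image_union] at hp
              intro hmem
              apply hp
              rcases Set.mem_symmDiff.mp hmem with ⟨h1, -⟩ | ⟨h1, -⟩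
              · exact Or.inl h1
              · exact Or.inr h1
      rcases hComp (Y S) (Y T) (hbic S) (hbic T) hE with ⟨-, h2⟩ | ⟨-, h2⟩
      · exact h2 ⟨1, by rw [Nat.cast_one, one_mul, hXM]; exact hsub1⟩
      · exact h2 ⟨1, by rw [Nat.cast_one, one_mul, hXM]; exact hsub2⟩
    have hle := Cardinal.mk_le_of_injective hinj
    rw [Cardinal.mk_set] at hle
    exact (Cardinal.cantor (Cardinal.mk M)).not_ge hle
  | inl hfin =>
    haveI := Fintype.ofFinite M
    by_contra hlt
    push_neg at hlt
    rw [Cardinal.mk_fintype] at hlt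
    have hn5 : 4 < Fintype.card M := by exact_mod_cast hlt
    obtain ⟨k, hk⟩ : ∃ k : ℕ, Cardinal.mk ↥X = k :=
      Cardinal.lt_aleph0.mp (Cardinal.lt_aleph0_of_finite ↥X)
    have h2k : k + k = Fintype.card M := by
      have hsum := Cardinal.mk_sum_compl X
      rw [← hX, hk, Cardinal.mk_fintype] at hsum
      exact_mod_cast hsum
    have hk3 : 3 ≤ k := by omega
    -- the slice lemma
    have slice : ∀ Y Z : Set M, Cardinal.mk ↥Y = (k : Cardinal) →
        Cardinal.mk ↥Z = (k : Cardinal) → E Y Z → Y = Z ∨ Z = Yᶜ := by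
      intro Y Z hYk hZk hEYZ
      have hbicc : ∀ W : Set M, Cardinal.mk ↥W = (k : Cardinal) → Bicard W X := by
        intro W hWk
        refine ⟨by rw [hWk, hk], ?_⟩
        have h1 := Cardinal.mk_sum_compl W
        have h2 := Cardinal.mk_sum_compl X
        rw [hWk] at h1; rw [hk] at h2
        have h3 : (k : Cardinal) + Cardinal.mk ↥Wᶜ = (k : Cardinal) + Cardinal.mk ↥Xᶜ := by
          rw [h1, h2]
        exact Cardinal.eq_of_add_eq_add_left h3 (Cardinal.nat_lt_aleph0 k)
      have hzero : ∀ a : Cardinal, Trilt a (Cardinal.mk ↥X) → a = 0 := by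
        rintro a ⟨-, h2⟩
        by_contra ha
        apply h2
        refine ⟨k, ?_⟩
        rw [hk]
        calc (k : Cardinal) = k * 1 := (mul_one _).symm
          _ ≤ k * a := by
              gcongr
              exact Cardinal.one_le_iff_ne_zero.mpr ha
      rcases hComp Y Z (hbicc Y hYk) (hbicc Z hZk) hEYZ with h | h
      · left
        have h0 : Cardinal.mk ↥(symmDiff Y Z) = 0 := hzero _ h
        rw [Cardinal.mk_eq_zero_iff] at h0
        have hempty : symmDiff Y Z = ∅ := Set.isEmpty_coe_sort.mp h0
        rw [← Set.bot_eq_empty] at hempty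
        exact symmDiff_eq_bot.mp hempty
      · right
        have h0 : Cardinal.mk ↥((symmDiff Y Z)ᶜ) = 0 := hzero _ h
        rw [Cardinal.mk_eq_zero_iff] at h0
        have hempty : (symmDiff Y Z)ᶜ = ∅ := Set.isEmpty_coe_sort.mp h0
        have huniv : symmDiff Y Z = Set.univ := Set.compl_empty_iff.mp hempty
        ext x
        have hx : x ∈ symmDiff Y Z := huniv ▸ Set.mem_univ x
        rw [Set.mem_symmDiff] at hx
        simp only [Set.mem_compl_iff]
        tauto
    classical
    obtain ⟨C, -, hC⟩ := Finset.exists_subset_card_eq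
      (s := (Finset.univ : Finset M)) (n := k - 2) (by rw [Finset.card_univ]; omega)
    have hCc : Cᶜ.card = k + 2 := by rw [Finset.card_compl, hC]; omega
    obtain ⟨c, hc⟩ : C.Nonempty := Finset.card_pos.mp (by omega)
    have hcardU : ∀ s : ↥(Cᶜ.powersetCard 2),
        Cardinal.mk ↥((C ∪ s.1 : Finset M) : Set M) = (k : Cardinal) := by
      intro s
      obtain ⟨hsub, hcard2⟩ := Finset.mem_powersetCard.mp s.2
      have hdisj : Disjoint C s.1 := by
        rw [Finset.disjoint_left]
        intro a haC has
        exact (Finset.mem_compl.mp (hsub has)) haC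
      have hmkeq : Cardinal.mk ↥((C ∪ s.1 : Finset M) : Set M)
          = ((C ∪ s.1 : Finset M).card : Cardinal) := by simp
      rw [hmkeq, Finset.card_union_of_disjoint hdisj, hC, hcard2]
      norm_cast
      omega
    have hinj : Function.Injective
        (fun s : ↥(Cᶜ.powersetCard 2) => ab ((C ∪ s.1 : Finset M) : Set M)) := by
      intro s₁ s₂ h
      have hE : E ((C ∪ s₁.1 : Finset M) : Set M) ((C ∪ s₂.1 : Finset M) : Set M) :=
        (hab _ _).mp h
      rcases slice _ _ (hcardU s₁) (hcardU s₂) hE with heq | hcompl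
      · have hfe : C ∪ s₁.1 = C ∪ s₂.1 := Finset.coe_injective heq
        obtain ⟨hsub1, -⟩ := Finset.mem_powersetCard.mp s₁.2
        obtain ⟨hsub2, -⟩ := Finset.mem_powersetCard.mp s₂.2
        apply Subtype.ext
        ext x
        constructor
        · intro hx
          have hx2 : x ∈ C ∪ s₂.1 := hfe ▸ Finset.mem_union_right C hx
          rcases Finset.mem_union.mp hx2 with h' | h'
          · exact absurd h' (Finset.mem_compl.mp (hsub1 hx))
          · exact h'
        · intro hx
          have hx2 : x ∈ C ∪ s₁.1 := hfe ▸ Finset.mem_union_right C hx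
          rcases Finset.mem_union.mp hx2 with h' | h'
          · exact absurd h' (Finset.mem_compl.mp (hsub2 hx))
          · exact h'
      · exfalso
        have h1 : (c : M) ∈ ((C ∪ s₁.1 : Finset M) : Set M) := by
          simp [Finset.mem_union, hc]
        have h2 : (c : M) ∈ ((C ∪ s₂.1 : Finset M) : Set M) := by
          simp [Finset.mem_union, hc]
        rw [hcompl] at h2
        exact h2 h1
    have hcard_le := Fintype.card_le_of_injective _ hinj
    rw [Fintype.card_coe, Finset.card_powersetCard, hCc] at hcard_le
    have hch : (k + 2).choose 2 = (k + 2) * (k + 1) / 2 := by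
      rw [Nat.choose_two_right]
      congr 1
    rw [hch] at hcard_le
    have hdiv : (k + 2) * (k + 1) / 2 ≤ k + k := h2k ▸ hcard_le
    have hev : Even ((k + 2) * (k + 1)) := by
      rw [mul_comm]; exact Nat.even_mul_succ_self (k + 1)
    have h4 : (k + 2) * (k + 1) ≤ 2 * (k + k) := by
      calc (k + 2) * (k + 1) = 2 * ((k + 2) * (k + 1) / 2) :=
            (Nat.two_mul_div_two_of_even hev).symm
        _ ≤ 2 * (k + k) := by omega
    nlinarith [h4, hk3, Nat.mul_le_mul_right k hk3]
end

section
/- Failure of restricted Basic Law V on a bifurcating concept: let M be a nonempty type and X : Set M with |X| = |Xᶜ| = |M| (as cardinals). Then there is no function ε : Set M → M such that for all Y, Z with Y ⊟ X and Z ⊟ X, ε Y = ε Z ↔ Y = Z. -/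
/-- Failure of restricted Basic Law V on a bifurcating concept. -/
theorem no_restricted_BLV {M : Type*} [Nonempty M] (X : Set M)
    (hX : Cardinal.mk X = Cardinal.mk (Xᶜ : Set M))
    (hXM : Cardinal.mk (Xᶜ : Set M) = Cardinal.mk M) :
    ¬ ∃ ε : Set M → M, ∀ Y Z : Set M, Bicard Y X → Bicard Z X →
      (ε Y = ε Z ↔ Y = Z) := by
  rintro ⟨ε, hε⟩
  -- #M = #M + #M
  have hXm : Cardinal.mk X = Cardinal.mk M := hX.trans hXM
  have hMM : Cardinal.mk M = Cardinal.mk M + Cardinal.mk M := by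
    conv_lhs => rw [← Cardinal.mk_sum_compl X, hXm, hXM]
  -- equiv M ⊕ M ≃ M
  have hsum : Cardinal.mk (M ⊕ M) = Cardinal.mk M := by
    simp [Cardinal.mk_sum, ← hMM]
  obtain ⟨w⟩ := Cardinal.eq.mp hsum
  obtain ⟨c⟩ := Cardinal.eq.mp hXM.symm
  set g : M → M := fun m => ((c (w (Sum.inl m))) : M) with hg
  set gB : M → M := fun m => ((c (w (Sum.inr m))) : M) with hgB
  have hginj : Function.Injective g := by
    intro a b hab
    have := Subtype.coe_injective hab
    have := c.injective this
    have := w.injective this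
    exact Sum.inl_injective this
  have hgX : ∀ m, g m ∈ Xᶜ := fun m => (c (w (Sum.inl m))).2
  have hgBX : ∀ m, gB m ∈ Xᶜ := fun m => (c (w (Sum.inr m))).2
  have hdisj : ∀ a b, g a ≠ gB b := by
    intro a b hab
    have := Subtype.coe_injective hab
    have := c.injective this
    have := w.injective this
    simp at this
  set F : Set M → Set M := fun S => X ∪ g '' S with hF
  have hFmono : ∀ S, X ⊆ F S := fun S => Set.subset_union_left
  have hle : ∀ S : Set M, Cardinal.mk (F S : Set M) ≤ Cardinal.mk M := fun S =>
    Cardinal.mk_set_le _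
  have hBicard : ∀ S : Set M, Bicard (F S) X := by
    intro S
    constructor
    · -- #(F S) = #X
      refine le_antisymm ?_ (Cardinal.mk_le_mk_of_subset (hFmono S))
      calc Cardinal.mk (F S : Set M) ≤ Cardinal.mk M := hle S
        _ = Cardinal.mk X := hXm.symm
    · -- #(F S)ᶜ = #Xᶜ
      refine le_antisymm ?_ ?_
      · calc Cardinal.mk ((F S)ᶜ : Set M) ≤ Cardinal.mk M := Cardinal.mk_set_le _
          _ = Cardinal.mk (Xᶜ : Set M) := hXM.symm
      · -- range gB ⊆ (F S)ᶜ
        have hsub : Set.range gB ⊆ (F S)ᶜ := by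
          rintro _ ⟨b, rfl⟩
          intro hmem
          rcases hmem with h | ⟨a, _, ha⟩
          · exact hgBX b h
          · exact hdisj a b ha
        calc Cardinal.mk (Xᶜ : Set M) = Cardinal.mk M := hXM
          _ = Cardinal.mk (Set.range gB) := (Cardinal.mk_range_eq gB (by
              intro a b hab
              have := Subtype.coe_injective hab
              have := c.injective this
              have := w.injective this
              exact Sum.inr_injective this)).symm
          _ ≤ Cardinal.mk ((F S)ᶜ : Set M) := Cardinal.mk_le_mk_of_subset hsub
  have hFinj : Function.Injective F := by
    intro S T hST
    have key : ∀ S : Set M, g '' S = F S \ X := by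
      intro S
      ext x
      constructor
      · rintro ⟨a, ha, rfl⟩
        exact ⟨Or.inr ⟨a, ha, rfl⟩, hgX a⟩
      · rintro ⟨hx1 | hx1, hx2⟩
        · exact absurd hx1 hx2
        · exact hx1
    have : g '' S = g '' T := by rw [key, key, hST]
    exact Set.image_injective.mpr hginj this
  -- ε ∘ F is injective, giving 2 ^ #M ≤ #M, contradicting Cantor
  have hinj : Function.Injective (fun S => ε (F S)) := by
    intro S T h
    exact hFinj ((hε (F S) (F T) (hBicard S) (hBicard T)).mp h)
  have hcard : Cardinal.mk (Set M) ≤ Cardinal.mk M := Cardinal.mk_le_of_injective hinj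
  rw [Cardinal.mk_set] at hcard
  exact absurd hcard (not_le.mpr (Cardinal.cantor _))
end

section
/- Failure of the restricted Liberated Complementation Principle on a bifurcating concept: let M be a nonempty type and X : Set M with |X| = |Xᶜ| = |M| (as cardinals). Then there is no function ℓ : Set M → M such that for all Y, Z with Y ⊟ X and Z ⊟ X, ℓ Y = ℓ Z ↔ (Y = Z ∨ Y = Zᶜ). (Hence LCP(= X) implies the universe is Dedekind finite.) -/
/-- Failure of the restricted Liberated Complementation Principle on a
bifurcating concept. -/
theorem no_restricted_LCP {M : Type*} [Nonempty M] (X : Set M)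
    (hX : Cardinal.mk X = Cardinal.mk (Xᶜ : Set M))
    (hXM : Cardinal.mk (Xᶜ : Set M) = Cardinal.mk M) :
    ¬ ∃ l : Set M → M, ∀ Y Z : Set M, Bicard Y X → Bicard Z X →
      (l Y = l Z ↔ (Y = Z ∨ Y = Zᶜ)) := by
  rintro ⟨l, hl⟩
  -- M is infinite
  have hXX : Cardinal.mk X = Cardinal.mk M := hX.trans hXM
  have hsum : Cardinal.mk M + Cardinal.mk M = Cardinal.mk M := by
    conv_rhs => rw [← Cardinal.mk_sum_compl X]
    rw [hXX, hXM]
  have hinf : Cardinal.aleph0 ≤ Cardinal.mk M := by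
    by_contra h
    push_neg at h
    obtain ⟨n, hn⟩ := Cardinal.lt_aleph0.mp h
    rw [hn] at hsum
    have : (↑(n + n) : Cardinal) = (n : Cardinal) := by push_cast; exact hsum
    have hnn : n + n = n := Nat.cast_injective this
    have : n = 0 := by omega
    rw [this] at hn
    exact (Cardinal.mk_ne_zero M) (by simpa using hn)
  -- equivalence X ≃ M ⊕ M
  have hXsum : Cardinal.mk X = Cardinal.mk (M ⊕ M) := by
    rw [Cardinal.mk_sum, Cardinal.lift_id, hXX, hsum]
  obtain ⟨e⟩ := Cardinal.eq.mp hXsum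
  set fA : M → M := fun m => ((e.symm (Sum.inl m) : X) : M) with hfA
  set fB : M → M := fun m => ((e.symm (Sum.inr m) : X) : M) with hfB
  have hfAinj : Function.Injective fA := fun a b h => by
    simpa using e.symm.injective (Subtype.val_injective h)
  have hfBinj : Function.Injective fB := fun a b h => by
    simpa using e.symm.injective (Subtype.val_injective h)
  have hAB : ∀ a b : M, fA a ≠ fB b := by
    intro a b h
    have := e.symm.injective (Subtype.val_injective h)
    simp at this
  have hAX : ∀ a, fA a ∈ X := fun a => (e.symm (Sum.inl a)).2
  have hBX : ∀ a, fB a ∈ X := fun a => (e.symm (Sum.inr a)).2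
  set Y : Set M → Set M := fun S => Set.range fB ∪ fA '' S with hY
  have hYX : ∀ S, Y S ⊆ X := by
    rintro S x (⟨a, rfl⟩ | ⟨a, -, rfl⟩)
    exacts [hBX a, hAX a]
  have hbic : ∀ S, Bicard (Y S) X := by
    intro S
    constructor
    · apply le_antisymm
      · exact (Cardinal.mk_le_mk_of_subset (hYX S))
      · calc Cardinal.mk X = Cardinal.mk M := hXX
          _ = Cardinal.mk (Set.range fB) := (Cardinal.mk_range_eq fB hfBinj).symm
          _ ≤ Cardinal.mk (Y S) := Cardinal.mk_le_mk_of_subset Set.subset_union_left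
    · apply le_antisymm
      · calc Cardinal.mk ((Y S)ᶜ : Set M) ≤ Cardinal.mk M := Cardinal.mk_set_le _
          _ = Cardinal.mk (Xᶜ : Set M) := hXM.symm
      · exact Cardinal.mk_le_mk_of_subset (Set.compl_subset_compl.mpr (hYX S))
  have hYinj : Function.Injective Y := by
    intro S T h
    ext s
    constructor
    · intro hs
      have : fA s ∈ Y T := h ▸ Set.mem_union_right _ ⟨s, hs, rfl⟩
      rcases this with ⟨b, hb⟩ | ⟨t, ht, hts⟩
      · exact absurd hb.symm (hAB s b)
      · rwa [← hfAinj hts]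
    · intro hs
      have : fA s ∈ Y S := h ▸ Set.mem_union_right _ ⟨s, hs, rfl⟩
      rcases this with ⟨b, hb⟩ | ⟨t, ht, hts⟩
      · exact absurd hb.symm (hAB s b)
      · rwa [← hfAinj hts]
  have hYnc : ∀ S T, Y S ≠ (Y T)ᶜ := by
    intro S T h
    obtain ⟨m⟩ := ‹Nonempty M›
    have h1 : fB m ∈ Y S := Set.mem_union_left _ ⟨m, rfl⟩
    have h2 : fB m ∈ Y T := Set.mem_union_left _ ⟨m, rfl⟩
    rw [h] at h1
    exact h1 h2
  have : Function.Injective (fun S => l (Y S)) := by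
    intro S T h
    rcases (hl (Y S) (Y T) (hbic S) (hbic T)).mp h with h' | h'
    · exact hYinj h'
    · exact absurd h' (hYnc S T)
  exact Function.cantor_injective _ this
end

section
/- Smallness for the Liberated Complementation Principle: (i) let X : Set M be a finite set with |X| = |Xᶜ|; if ℓ : Set M → M satisfies, for all Y, Z with Y ⊟ X and Z ⊟ X, ℓ Y = ℓ Z ↔ (Y = Z ∨ Y = Zᶜ), then Cardinal.mk M ≤ 4. (ii) If M is a finite type and ℓ : Set M → M satisfies ℓ X = ℓ Y ↔ (X = Y ∨ X = Yᶜ) for all X, Y : Set M, then Cardinal.mk M ≤ 2. -/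
private lemma LCP_cb_big : ∀ n, 3 ≤ n → 4 * n < Nat.centralBinom n := by
  intro n hn
  induction n with
  | zero => omega
  | succ m ih =>
    rcases Nat.lt_or_ge m 3 with hm | hm
    · interval_cases m
      · omega
      · omega
      · decide
    · have h1 := ih hm
      have h2 : 2 * Nat.centralBinom m ≤ Nat.centralBinom (m + 1) := by
        have := Nat.succ_mul_centralBinom_succ m
        nlinarith [Nat.centralBinom_pos m]
      omega

private lemma LCP_pow_big : ∀ m, 3 ≤ m → 2 * m < 2 ^ m := by
  intro m hm
  induction m with
  | zero => omega
  | succ k ih =>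
    rcases Nat.lt_or_ge k 3 with hk | hk
    · interval_cases k <;> simp_all
    · have := ih hk
      have : 2 ^ (k+1) = 2 * 2 ^ k := by ring
      omega

private lemma LCP_mk_coe_set {α : Type*} [Fintype α] [DecidableEq α] (s : Finset α) :
    Cardinal.mk (↑s : Set α) = (s.card : Cardinal) := by
  simp

private lemma LCP_mk_finite_set {α : Type*} [Fintype α] (X : Set α) (hX : X.Finite) :
    Cardinal.mk X = (hX.toFinset.card : Cardinal) := by
  classical
  rw [hX.card_toFinset, Cardinal.mk_fintype]


/-- Smallness results for the Liberated Complementation Principle. -/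
theorem LCP_smallness {M : Type*} :
    (∀ (X : Set M) (l : Set M → M), X.Finite →
      Cardinal.mk X = Cardinal.mk (Xᶜ : Set M) →
      (∀ Y Z : Set M, Bicard Y X → Bicard Z X → (l Y = l Z ↔ (Y = Z ∨ Y = Zᶜ))) →
      Cardinal.mk M ≤ 4) ∧
    (Finite M → ∀ l : Set M → M,
      (∀ X Y : Set M, l X = l Y ↔ (X = Y ∨ X = Yᶜ)) →
      Cardinal.mk M ≤ 2) := by
  constructor
  · intro X l hXfin hcard hl
    simp only [Bicard] at hl
    classical
    have hXcfin : (Xᶜ : Set M).Finite := by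
      rw [← Set.finite_coe_iff, ← Cardinal.lt_aleph0_iff_finite, ← hcard,
        Cardinal.lt_aleph0_iff_finite]
      exact Set.finite_coe_iff.mpr hXfin
    have hMfin : Finite M := by
      have h := hXfin.union hXcfin
      rw [Set.union_compl_self, Set.finite_univ_iff] at h
      exact h
    cases nonempty_fintype M
    set n := hXfin.toFinset.card with hn
    have hmkX : Cardinal.mk X = (n : Cardinal) := LCP_mk_finite_set X hXfin
    have hmkXc : Cardinal.mk (Xᶜ : Set M) = (hXcfin.toFinset.card : Cardinal) :=
      LCP_mk_finite_set _ hXcfin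
    have hcompl : (hXfin.toFinset)ᶜ = hXcfin.toFinset := by
      ext x; simp [Set.mem_compl_iff]
    have hXc_card : hXcfin.toFinset.card = n := by
      rw [hmkX, hmkXc] at hcard
      exact_mod_cast hcard.symm
    have hM : Fintype.card M = 2 * n := by
      have h := Finset.card_compl (hXfin.toFinset)
      rw [hcompl, hXc_card] at h
      have hle : n ≤ Fintype.card M := by
        simpa [hn] using Finset.card_le_univ hXfin.toFinset
      omega
    set S : Finset (Finset M) := Finset.powersetCard n Finset.univ with hS
    have hmem : ∀ s : Finset M, s ∈ S → s.card = n := by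
      intro s hs
      exact (Finset.mem_powersetCard_univ.mp hs)
    have hbic : ∀ s : Finset M, s ∈ S →
        (Cardinal.mk (↑s : Set M) = Cardinal.mk X ∧
         Cardinal.mk ((↑s : Set M)ᶜ : Set M) = Cardinal.mk (Xᶜ : Set M)) := by
      intro s hs
      have h1 : Cardinal.mk (↑s : Set M) = (n : Cardinal) := by
        rw [LCP_mk_coe_set, hmem s hs]
      have hsc : ((↑s : Set M)ᶜ : Set M) = ↑(sᶜ) := by simp
      have h2 : Cardinal.mk ((↑s : Set M)ᶜ : Set M) = (n : Cardinal) := by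
        rw [hsc, LCP_mk_coe_set, Finset.card_compl, hmem s hs, hM]
        norm_num [two_mul]
      have hXc2 : Cardinal.mk (Xᶜ : Set M) = (n : Cardinal) := by
        rw [hmkXc, hXc_card]
      exact ⟨h1.trans hmkX.symm, h2.trans hXc2.symm⟩
    set f : Finset M → M := fun s => l ↑s with hf
    have hfib : ∀ a ∈ S.image f, (S.filter fun s => f s = a).card ≤ 2 := by
      intro a ha
      obtain ⟨s, hsS, hsa⟩ := Finset.mem_image.mp ha
      have hsub : (S.filter fun t => f t = a) ⊆ {s, sᶜ} := by
        intro t ht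
        obtain ⟨htS, hta⟩ := Finset.mem_filter.mp ht
        have hts : l ↑t = l ↑s := hta.trans hsa.symm
        simp only [Finset.mem_insert, Finset.mem_singleton]
        rcases (hl ↑t ↑s (hbic t htS) (hbic s hsS)).mp hts with h | h
        · left; exact_mod_cast Finset.coe_injective h
        · right
          apply Finset.coe_injective
          rw [h]; simp
      calc (S.filter fun t => f t = a).card ≤ ({s, sᶜ} : Finset (Finset M)).card :=
            Finset.card_le_card hsub
        _ ≤ 2 := (Finset.card_insert_le _ _).trans (by simp)
    have hineq : S.card ≤ 2 * (S.image f).card := Finset.card_le_mul_card_image S 2 hfib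
    have hScard : S.card = Nat.centralBinom n := by
      rw [hS, Finset.card_powersetCard, Finset.card_univ, hM, Nat.centralBinom]
    have himg : (S.image f).card ≤ 2 * n := by
      calc (S.image f).card ≤ Fintype.card M := Finset.card_le_univ _
        _ = 2 * n := hM
    have hkey : Nat.centralBinom n ≤ 4 * n := by
      rw [← hScard]; omega
    have hn2 : n ≤ 2 := by
      by_contra h
      have := LCP_cb_big n (by omega)
      omega
    have h4 : Fintype.card M ≤ 4 := by omega
    rw [Cardinal.mk_fintype]
    exact_mod_cast h4
  · intro hMfin l hl
    classical
    cases nonempty_fintype M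
    have hne : Nonempty M := ⟨l ∅⟩
    set U : Finset (Set M) := Finset.univ with hUdef
    have hfib : ∀ a ∈ U.image l, (U.filter fun s => l s = a).card ≤ 2 := by
      intro a ha
      obtain ⟨s, hsU, hsa⟩ := Finset.mem_image.mp ha
      have hsub : (U.filter fun t => l t = a) ⊆ {s, sᶜ} := by
        intro t ht
        obtain ⟨-, hta⟩ := Finset.mem_filter.mp ht
        simp only [Finset.mem_insert, Finset.mem_singleton]
        exact (hl t s).mp (hta.trans hsa.symm)
      exact (Finset.card_le_card hsub).trans ((Finset.card_insert_le _ _).trans (by simp))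
    have h1 : U.card ≤ 2 * (U.image l).card := Finset.card_le_mul_card_image U 2 hfib
    have hU : U.card = 2 ^ Fintype.card M := by
      rw [hUdef, Finset.card_univ, Fintype.card_set]
    have himg : (U.image l).card ≤ Fintype.card M := Finset.card_le_univ _
    have hm1 : 1 ≤ Fintype.card M := Fintype.card_pos_iff.mpr hne
    have hm : Fintype.card M ≤ 2 := by
      by_contra h
      have := LCP_pow_big (Fintype.card M) (by omega)
      omega
    rw [Cardinal.mk_fintype]
    exact_mod_cast hm
end
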